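/- arXiv:1203.4691 — 5 statements merged into one kernel-verified Lean document; each statement's English description precedes it below -/
import Mathlib

section
/- If f : [0,∞) → ℝ is twice continuously differentiable, nonincreasing (f' ≤ 0) and convex (f'' ≥ 0) on [t₀,∞) for some t₀, and ∫₁^∞ |f(t)| t^(-3/2) dt < ∞, then ∫_{t₀}^∞ f''(s) √s ds < ∞. -/
open MeasureTheory Set

/-- If `f : [0,∞) → ℝ` is C², nonincreasing (`f' ≤ 0`) and convex (`f'' ≥ 0`) on `[t₀,∞)`,
and the Uchiyama integral test `∫₁^∞ |f(t)| t^(-3/2) dt < ∞` holds, then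
`∫_{t₀}^∞ f''(s) √s ds < ∞`. -/
theorem stmt0 (f : ℝ → ℝ) (t₀ : ℝ) (ht₀ : 0 ≤ t₀)
    (hf : ContDiff ℝ 2 f)
    (hf' : ∀ s, t₀ ≤ s → deriv f s ≤ 0)
    (hf'' : ∀ s, t₀ ≤ s → 0 ≤ deriv (deriv f) s)
    (htest : IntegrableOn (fun t => |f t| * t ^ (-(3:ℝ)/2)) (Ici (1:ℝ))) :
    IntegrableOn (fun s => deriv (deriv f) s * Real.sqrt s) (Ici t₀) := by
  -- regularity facts
  have h2 : ContDiff ℝ (1+1) f := by norm_num; exact hf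
  obtain ⟨hd0, -, hf1⟩ := contDiff_succ_iff_deriv.mp h2
  obtain ⟨hd1, hc2⟩ := contDiff_one_iff_deriv.mp hf1
  have hgc : Continuous (fun s => deriv (deriv f) s * Real.sqrt s) :=
    hc2.mul Real.continuous_sqrt
  set t₁ : ℝ := max t₀ 1 with ht₁def
  have h1t₁ : (1:ℝ) ≤ t₁ := le_max_right _ _
  have h0t₁ : (0:ℝ) < t₁ := lt_of_lt_of_le one_pos h1t₁
  have ht₀t₁ : t₀ ≤ t₁ := le_max_left _ _
  -- f is antitone on Ici t₀
  have hanti : AntitoneOn f (Ici t₀) := by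
    apply antitoneOn_of_deriv_nonpos (convex_Ici t₀) hd0.continuous.continuousOn
      hd0.differentiableOn
    intro x hx
    rw [interior_Ici] at hx
    exact hf' x (le_of_lt hx)
  set M : ℝ := ∫ t in Ici (1:ℝ), |f t| * t ^ (-(3:ℝ)/2) with hMdef
  have hM0 : 0 ≤ M := setIntegral_nonneg measurableSet_Ici (fun t ht => by
    have h1 : (0:ℝ) < t := lt_of_lt_of_le one_pos ht
    positivity)
  have hrpow : ∀ t : ℝ, 0 < t → t ^ (-(3:ℝ)/2) = (t * Real.sqrt t)⁻¹ := by
    intro t ht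
    rw [show (-(3:ℝ)/2) = -(1 + 1/2) by norm_num, Real.rpow_neg ht.le, Real.rpow_add ht,
      Real.rpow_one, ← Real.sqrt_eq_rpow]
  -- tail bound
  have htail : ∀ a b : ℝ, 1 ≤ a → a ≤ b → (∫ t in a..b, |f t| * t ^ (-(3:ℝ)/2)) ≤ M := by
    intro a b ha hab
    rw [intervalIntegral.integral_of_le hab, hMdef]
    apply setIntegral_mono_set htest
    · filter_upwards [ae_restrict_mem measurableSet_Ici] with t ht
      have h1 : (0:ℝ) < t := lt_of_lt_of_le one_pos ht
      simp only [Pi.zero_apply]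
      positivity
    · apply HasSubset.Subset.eventuallyLE
      intro x hx
      exact le_trans ha (le_of_lt hx.1)
  -- pointwise boundary bound
  have hbd : ∀ T, t₁ ≤ T → -f T ≤ 4 * M * Real.sqrt T := by
    intro T hT
    have hT1 : (1:ℝ) ≤ T := le_trans h1t₁ hT
    have hT0 : (0:ℝ) < T := lt_of_lt_of_le one_pos hT1
    have hsT : 0 < Real.sqrt T := Real.sqrt_pos.mpr hT0
    by_cases hfT : 0 ≤ f T
    · have h1 : -f T ≤ 0 := neg_nonpos.mpr hfT
      have h3 : 0 ≤ 4 * M * Real.sqrt T := by positivity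
      linarith
    push_neg at hfT
    have hmono : ∫ t in T..(2*T), (-f T) * (2*T*Real.sqrt (2*T))⁻¹
        ≤ ∫ t in T..(2*T), |f t| * t ^ (-(3:ℝ)/2) := by
      apply intervalIntegral.integral_mono_on (by linarith)
      · exact intervalIntegrable_const
      · apply ContinuousOn.intervalIntegrable
        apply ContinuousOn.mul (continuous_abs.comp hd0.continuous).continuousOn
        apply ContinuousOn.rpow_const continuousOn_id
        intro x hx
        rw [uIcc_of_le (by linarith : T ≤ 2*T)] at hx
        left
        have : (0:ℝ) < x := lt_of_lt_of_le hT0 hx.1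
        exact ne_of_gt this
      · intro t ht
        have htT : T ≤ t := ht.1
        have ht2T : t ≤ 2*T := ht.2
        have ht0 : (0:ℝ) < t := lt_of_lt_of_le hT0 htT
        rw [hrpow t ht0]
        have hft : f t ≤ f T := hanti (mem_Ici.mpr (le_trans ht₀t₁ hT))
          (mem_Ici.mpr (le_trans (le_trans ht₀t₁ hT) htT)) htT
        have h1 : -f T ≤ |f t| := le_trans (neg_le_neg hft) (neg_le_abs _)
        have h2 : (2*T*Real.sqrt (2*T))⁻¹ ≤ (t * Real.sqrt t)⁻¹ := by
          apply inv_anti₀ (by positivity)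
          exact mul_le_mul ht2T (Real.sqrt_le_sqrt ht2T) (Real.sqrt_nonneg t) (by linarith)
        calc (-f T) * (2*T*Real.sqrt (2*T))⁻¹ ≤ |f t| * (2*T*Real.sqrt (2*T))⁻¹ :=
              mul_le_mul_of_nonneg_right h1 (by positivity)
          _ ≤ |f t| * (t*Real.sqrt t)⁻¹ := mul_le_mul_of_nonneg_left h2 (abs_nonneg _)
    have hconst : ∫ t in T..(2*T), (-f T) * (2*T*Real.sqrt (2*T))⁻¹
        = T * ((-f T) * (2*T*Real.sqrt (2*T))⁻¹) := by
      rw [intervalIntegral.integral_const, smul_eq_mul]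
      ring
    have key : T * ((-f T) * (2*T*Real.sqrt (2*T))⁻¹) ≤ M := by
      rw [← hconst]
      exact le_trans hmono (htail T (2*T) hT1 (by linarith))
    have hs2T : Real.sqrt (2*T) ≤ 2 * Real.sqrt T := by
      rw [show (2:ℝ)*Real.sqrt T = Real.sqrt 4 * Real.sqrt T by
          rw [show (4:ℝ) = 2^2 by norm_num, Real.sqrt_sq (by norm_num : (0:ℝ) ≤ 2)],
        ← Real.sqrt_mul (by norm_num : (0:ℝ) ≤ 4)]
      exact Real.sqrt_le_sqrt (by linarith)
    have h3 : (4*T*Real.sqrt T)⁻¹ ≤ (2*T*Real.sqrt (2*T))⁻¹ := by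
      apply inv_anti₀ (by positivity)
      nlinarith [Real.sqrt_pos.mpr (show (0:ℝ) < 2*T by linarith)]
    have h5 : T * ((-f T) * (4*T*Real.sqrt T)⁻¹) ≤ M := by
      refine le_trans ?_ key
      have hnf : (0:ℝ) < -f T := neg_pos.mpr hfT
      have := mul_le_mul_of_nonneg_left h3 hnf.le
      nlinarith
    have h6 : T * ((-f T) * (4*T*Real.sqrt T)⁻¹) = (-f T) / (4 * Real.sqrt T) := by
      field_simp
    rw [h6, div_le_iff₀ (by positivity)] at h5
    calc -f T ≤ M * (4 * Real.sqrt T) := h5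
      _ = 4 * M * Real.sqrt T := by ring
  have hkey : ∀ T, t₁ ≤ T → (∫ s in t₁..T, deriv (deriv f) s * Real.sqrt s)
      ≤ Real.sqrt t₁ * |deriv f t₁| + 2*M + (Real.sqrt t₁)⁻¹ * |f t₁| / 2 + M/4 := by
    intro T hT
    have huIcc : uIcc t₁ T = Icc t₁ T := uIcc_of_le hT
    have hxpos : ∀ x ∈ Icc t₁ T, (0:ℝ) < x := fun x hx => lt_of_lt_of_le h0t₁ hx.1
    -- first integration by parts
    have hu1 : ∀ x ∈ uIcc t₁ T, HasDerivAt Real.sqrt (1/(2*Real.sqrt x)) x := by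
      intro x hx; rw [huIcc] at hx
      exact Real.hasDerivAt_sqrt (hxpos x hx).ne'
    have hv1 : ∀ x ∈ uIcc t₁ T, HasDerivAt (deriv f) (deriv (deriv f) x) x :=
      fun x _ => (hd1 x).hasDerivAt
    have hiu1 : IntervalIntegrable (fun x => 1/(2*Real.sqrt x)) volume t₁ T := by
      apply ContinuousOn.intervalIntegrable
      apply ContinuousOn.div continuousOn_const
        (continuous_const.mul Real.continuous_sqrt).continuousOn
      intro x hx; rw [huIcc] at hx
      have := hxpos x hx
      exact mul_ne_zero two_ne_zero (Real.sqrt_pos.mpr this).ne'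
    have hiv1 : IntervalIntegrable (deriv (deriv f)) volume t₁ T := hc2.intervalIntegrable _ _
    have IBP1 := intervalIntegral.integral_mul_deriv_eq_deriv_mul hu1 hv1 hiu1 hiv1
    -- second integration by parts
    have hu2 : ∀ x ∈ uIcc t₁ T, HasDerivAt (fun y => (Real.sqrt y)⁻¹) (-(1/(2*Real.sqrt x)) / x) x := by
      intro x hx; rw [huIcc] at hx
      have hx0 := hxpos x hx
      have h := (Real.hasDerivAt_sqrt hx0.ne').inv (by positivity)
      rw [Real.sq_sqrt hx0.le] at h
      exact h
    have hv2 : ∀ x ∈ uIcc t₁ T, HasDerivAt f (deriv f x) x := fun x _ => (hd0 x).hasDerivAt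
    have hiu2 : IntervalIntegrable (fun x => -(1/(2*Real.sqrt x)) / x) volume t₁ T := by
      apply ContinuousOn.intervalIntegrable
      apply ContinuousOn.div
      · exact (continuousOn_const.div (continuous_const.mul Real.continuous_sqrt).continuousOn
          (fun x hx => by rw [huIcc] at hx; have := hxpos x hx; exact mul_ne_zero two_ne_zero (Real.sqrt_pos.mpr this).ne')).neg
      · exact continuousOn_id
      · intro x hx; rw [huIcc] at hx; exact (hxpos x hx).ne'
    have hiv2 : IntervalIntegrable (deriv f) volume t₁ T := hf1.continuous.intervalIntegrable _ _
    have IBP2 := intervalIntegral.integral_mul_deriv_eq_deriv_mul hu2 hv2 hiu2 hiv2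
    -- rewriting
    have e1 : (∫ s in t₁..T, deriv (deriv f) s * Real.sqrt s)
        = ∫ x in t₁..T, Real.sqrt x * deriv (deriv f) x :=
      intervalIntegral.integral_congr (fun x _ => mul_comm _ _)
    have e2 : (∫ x in t₁..T, 1/(2*Real.sqrt x) * deriv f x)
        = (1/2) * ∫ x in t₁..T, (Real.sqrt x)⁻¹ * deriv f x := by
      rw [← intervalIntegral.integral_const_mul]
      apply intervalIntegral.integral_congr
      intro x _
      simp only [one_div, mul_inv]
      ring
    have e3 : (∫ x in t₁..T, (-(1/(2*Real.sqrt x))/x) * f x)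
        = -(1/2) * ∫ x in t₁..T, (x * Real.sqrt x)⁻¹ * f x := by
      rw [← intervalIntegral.integral_const_mul]
      apply intervalIntegral.integral_congr
      intro x _
      simp only [one_div, mul_inv, div_eq_mul_inv]
      ring
    set A := ∫ x in t₁..T, (x * Real.sqrt x)⁻¹ * f x with hA
    have hAbound : |A| ≤ M := by
      calc |A| ≤ ∫ x in t₁..T, |(x*Real.sqrt x)⁻¹ * f x| :=
            intervalIntegral.abs_integral_le_integral_abs hT
        _ = ∫ x in t₁..T, |f x| * x ^ (-(3:ℝ)/2) := by
            apply intervalIntegral.integral_congr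
            intro x hx; rw [huIcc] at hx
            have hx0 := hxpos x hx
            show |(x * Real.sqrt x)⁻¹ * f x| = |f x| * x ^ (-(3:ℝ)/2)
            rw [abs_mul, abs_of_nonneg (by positivity : (0:ℝ) ≤ (x*Real.sqrt x)⁻¹),
              hrpow x hx0, mul_comm]
        _ ≤ M := htail t₁ T h1t₁ hT
    have hfinal : (∫ s in t₁..T, deriv (deriv f) s * Real.sqrt s)
        = Real.sqrt T * deriv f T - Real.sqrt t₁ * deriv f t₁
          - (1/2) * ((Real.sqrt T)⁻¹ * f T - (Real.sqrt t₁)⁻¹ * f t₁ - (-(1/2) * A)) := by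
      rw [e1, IBP1, e2, IBP2, e3]
    -- bounds
    have hT0 : (0:ℝ) < T := lt_of_lt_of_le h0t₁ hT
    have hsT : (0:ℝ) < Real.sqrt T := Real.sqrt_pos.mpr hT0
    have hst₁ : (0:ℝ) < Real.sqrt t₁ := Real.sqrt_pos.mpr h0t₁
    have b1 : Real.sqrt T * deriv f T ≤ 0 :=
      mul_nonpos_of_nonneg_of_nonpos (Real.sqrt_nonneg T) (hf' T (le_trans ht₀t₁ hT))
    have b2 : -(Real.sqrt t₁ * deriv f t₁) ≤ Real.sqrt t₁ * |deriv f t₁| := by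
      rw [← mul_neg]
      exact mul_le_mul_of_nonneg_left (neg_le_abs _) (Real.sqrt_nonneg t₁)
    have b3 : -((Real.sqrt T)⁻¹ * f T) ≤ 4 * M := by
      have h := mul_le_mul_of_nonneg_left (hbd T hT) (inv_nonneg.mpr hsT.le)
      rw [← mul_neg]
      refine le_trans h ?_
      rw [show (Real.sqrt T)⁻¹ * (4*M*Real.sqrt T) = 4*M*((Real.sqrt T)⁻¹ * Real.sqrt T) by ring,
        inv_mul_cancel₀ hsT.ne', mul_one]
    have b4 : (Real.sqrt t₁)⁻¹ * f t₁ ≤ (Real.sqrt t₁)⁻¹ * |f t₁| :=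
      mul_le_mul_of_nonneg_left (le_abs_self _) (inv_nonneg.mpr hst₁.le)
    have b5 : -A ≤ M := le_trans (neg_le_abs _) hAbound
    rw [hfinal]
    linarith
  set C : ℝ := Real.sqrt t₁ * |deriv f t₁| + 2*M + (Real.sqrt t₁)⁻¹ * |f t₁| / 2 + M/4 with hC
  have hIoi : IntegrableOn (fun s => deriv (deriv f) s * Real.sqrt s) (Ioi t₁) := by
    apply integrableOn_Ioi_of_intervalIntegral_norm_bounded C t₁
      (b := fun n : ℕ => t₁ + n) (fun n => hgc.integrableOn_Ioc)
      (Filter.tendsto_atTop_add_const_left _ _ tendsto_natCast_atTop_atTop)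
    apply Filter.Eventually.of_forall
    intro n
    have hn : t₁ ≤ t₁ + (n:ℝ) := le_add_of_nonneg_right (Nat.cast_nonneg n)
    have heq : (∫ x in t₁..(t₁+(n:ℝ)), ‖deriv (deriv f) x * Real.sqrt x‖)
        = ∫ x in t₁..(t₁+(n:ℝ)), deriv (deriv f) x * Real.sqrt x := by
      apply intervalIntegral.integral_congr
      intro x hx
      rw [uIcc_of_le hn] at hx
      exact Real.norm_of_nonneg (mul_nonneg (hf'' x (le_trans ht₀t₁ hx.1)) (Real.sqrt_nonneg _))
    rw [heq]
    exact hkey _ hn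
  have hIci1 : IntegrableOn (fun s => deriv (deriv f) s * Real.sqrt s) (Ici t₁) :=
    Iff.mpr integrableOn_Ici_iff_integrableOn_Ioi hIoi
  have hIcc : IntegrableOn (fun s => deriv (deriv f) s * Real.sqrt s) (Icc t₀ t₁) :=
    hgc.integrableOn_Icc
  refine (hIcc.union hIci1).mono_set ?_
  intro x hx
  rcases le_total x t₁ with h | h
  · exact Or.inl ⟨hx, h⟩
  · exact Or.inr h
end

section
/- If f : [0,∞) → ℝ is twice continuously differentiable, nonincreasing and convex on [t₀,∞), and ∫₁^∞ |f(t)| t^(-3/2) dt < ∞, then ∫_{t₀}^∞ f'(s)² ds < ∞. -/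
open MeasureTheory Set

set_option maxHeartbeats 1000000

/-- If `f : [0,∞) → ℝ` is C², nonincreasing (`f' ≤ 0`) and convex (`f'' ≥ 0`) on `[t₀,∞)`,
and the Uchiyama integral test `∫₁^∞ |f(t)| t^(-3/2) dt < ∞` holds, then
`∫_{t₀}^∞ f''(s) √s ds < ∞`. -/
theorem stmt1 (f : ℝ → ℝ) (t₀ : ℝ) (ht₀ : 0 ≤ t₀)
    (hf : ContDiff ℝ 2 f)
    (hf' : ∀ s, t₀ ≤ s → deriv f s ≤ 0)
    (hf'' : ∀ s, t₀ ≤ s → 0 ≤ deriv (deriv f) s)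
    (htest : IntegrableOn (fun t => |f t| * t ^ (-(3:ℝ)/2)) (Ici (1:ℝ))) :
    IntegrableOn (fun s => (deriv f s) ^ 2) (Ici t₀) := by
  have hf2 : ContDiff ℝ ((1:ℕ∞)+1) f := by norm_num at hf ⊢; exact hf
  have hg1 : ContDiff ℝ 1 (deriv f) := (contDiff_succ_iff_deriv.mp hf2).2.2
  have hg11 : ContDiff ℝ ((0:ℕ∞)+1) (deriv f) := by norm_num at hg1 ⊢; exact hg1
  have hfd : Differentiable ℝ f := hf.differentiable (by norm_num)
  have hgd : Differentiable ℝ (deriv f) := hg1.differentiable (by norm_num)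
  have hgc : Continuous (deriv f) := hgd.continuous
  have hhc : Continuous (deriv (deriv f)) := (contDiff_succ_iff_deriv.mp hg11).2.2.continuous
  have hfa : AntitoneOn f (Ici t₀) := by
    apply antitoneOn_of_deriv_nonpos (convex_Ici t₀) hfd.continuous.continuousOn
      (fun x _ => (hfd x).differentiableWithinAt)
    intro x hx
    exact hf' x (le_of_lt (by simpa using hx))
  have hgm : MonotoneOn (deriv f) (Ici t₀) := by
    apply monotoneOn_of_deriv_nonneg (convex_Ici t₀) hgc.continuousOn
      (fun x _ => (hgd x).differentiableWithinAt)
    intro x hx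
    exact hf'' x (le_of_lt (by simpa using hx))
  obtain ⟨a, ha⟩ : ∃ x : ℝ, x = max t₀ 1 := ⟨_, rfl⟩
  have ha1 : (1:ℝ) ≤ a := ha ▸ le_max_right _ _
  have ha0 : (0:ℝ) < a := lt_of_lt_of_le one_pos ha1
  have hat : t₀ ≤ a := ha ▸ le_max_left _ _
  obtain ⟨I, hIdef⟩ : ∃ x : ℝ, x = ∫ t in Ici (1:ℝ), |f t| * t ^ (-(3:ℝ)/2) := ⟨_, rfl⟩
  have hI0 : 0 ≤ I := by
    rw [hIdef]
    apply setIntegral_nonneg measurableSet_Ici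
    intro t ht
    exact mul_nonneg (abs_nonneg _) (Real.rpow_nonneg (le_trans zero_le_one ht) _)
  -- tail bound
  have htail : ∀ c d : ℝ, 1 ≤ c → (∫ u in c..d, |f u| * u ^ (-(3:ℝ)/2)) ≤ I := by
    intro c d hc
    rw [hIdef]
    rcases le_or_gt d c with hdc | hcd
    · rw [intervalIntegral.integral_of_ge hdc]
      have : 0 ≤ ∫ u in Ioc d c, |f u| * u ^ (-(3:ℝ)/2) := by
        apply setIntegral_nonneg measurableSet_Ioc
        intro t ht
        rcases le_or_gt 0 t with h0 | h0
        · exact mul_nonneg (abs_nonneg _) (Real.rpow_nonneg h0 _)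
        · rw [Real.rpow_def_of_neg h0]
          have hc0 : Real.cos (-(3:ℝ)/2 * Real.pi) = 0 := by
            have : (-(3:ℝ)/2 * Real.pi) = -(Real.pi + Real.pi/2) := by ring
            rw [this, Real.cos_neg, Real.cos_add]
            simp
          rw [hc0, mul_zero, mul_zero]
      linarith
    · rw [intervalIntegral.integral_of_le hcd.le]
      apply setIntegral_mono_set htest
      · refine (ae_restrict_iff' measurableSet_Ici).2 (Filter.Eventually.of_forall fun t ht => ?_)
        exact mul_nonneg (abs_nonneg _) (Real.rpow_nonneg (le_trans zero_le_one ht) _)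
      · apply Filter.Eventually.of_forall
        intro x hx
        exact le_trans hc hx.1.le
  obtain ⟨K, hKdef⟩ : ∃ x : ℝ, x = |f a| + 4 * I := ⟨_, rfl⟩
  have hK0 : 0 ≤ K := by rw [hKdef]; positivity
  have hsqrt1 : ∀ t : ℝ, 1 ≤ t → (1:ℝ) ≤ t ^ ((1:ℝ)/2) := fun t ht =>
    Real.one_le_rpow ht (by norm_num)
  have hfK : ∀ t, a ≤ t → |f t| ≤ K * t ^ ((1:ℝ)/2) := by
    intro t hta
    have ht1 : (1:ℝ) ≤ t := le_trans ha1 hta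
    have ht0 : (0:ℝ) < t := lt_of_lt_of_le one_pos ht1
    have hs0 : (0:ℝ) ≤ t ^ ((1:ℝ)/2) := Real.rpow_nonneg ht0.le _
    rcases le_or_gt 0 (f t) with hpos | hneg
    · have h1 : f t ≤ f a := hfa (mem_Ici.2 hat) (mem_Ici.2 (le_trans hat hta)) hta
      have h2 : |f t| ≤ |f a| := by
        rw [abs_of_nonneg hpos]; exact le_trans h1 (le_abs_self _)
      have h3 : (1:ℝ) ≤ t ^ ((1:ℝ)/2) := hsqrt1 t ht1
      nlinarith [abs_nonneg (f a)]
    · have hmono : ∀ u ∈ Icc t (2*t), |f t| * (2*t) ^ (-(3:ℝ)/2) ≤ |f u| * u ^ (-(3:ℝ)/2) := by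
        intro u hu
        have hu0 : (0:ℝ) < u := lt_of_lt_of_le ht0 hu.1
        have hfu : f u ≤ f t := hfa (mem_Ici.2 (le_trans hat hta))
          (mem_Ici.2 (le_trans (le_trans hat hta) hu.1)) hu.1
        have h1 : |f t| ≤ |f u| := by
          rw [abs_of_neg hneg, abs_of_neg (lt_of_le_of_lt hfu hneg)]; linarith
        have h2 : (2*t) ^ (-(3:ℝ)/2) ≤ u ^ (-(3:ℝ)/2) :=
          Real.rpow_le_rpow_of_nonpos hu0 hu.2 (by norm_num)
        exact mul_le_mul h1 h2 (Real.rpow_nonneg (by positivity) _) (abs_nonneg _)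
      have hint : IntervalIntegrable (fun u => |f u| * u ^ (-(3:ℝ)/2)) volume t (2*t) := by
        rw [intervalIntegrable_iff_integrableOn_Ioc_of_le (by linarith)]
        exact htest.mono_set (fun x hx => le_trans ht1 hx.1.le)
      have hIc : (∫ _u in t..(2*t), |f t| * (2*t) ^ (-(3:ℝ)/2))
          ≤ ∫ u in t..(2*t), |f u| * u ^ (-(3:ℝ)/2) :=
        intervalIntegral.integral_mono_on (by linarith) intervalIntegrable_const hint hmono
      rw [intervalIntegral.integral_const, smul_eq_mul] at hIc
      have hIc2 : (2*t - t) * (|f t| * (2*t) ^ (-(3:ℝ)/2)) ≤ I :=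
        le_trans hIc (htail t (2*t) ht1)
      have e1 : (2*t) ^ (-(3:ℝ)/2) = (2:ℝ) ^ (-(3:ℝ)/2) * t ^ (-(3:ℝ)/2) :=
        Real.mul_rpow (by norm_num) ht0.le
      have e2 : t * t ^ (-(3:ℝ)/2) = t ^ (-(1:ℝ)/2) := by
        rw [show (-(1:ℝ)/2) = 1 + (-(3:ℝ)/2) by norm_num, Real.rpow_add ht0, Real.rpow_one]
      have hIc3 : (2:ℝ) ^ (-(3:ℝ)/2) * (|f t| * t ^ (-(1:ℝ)/2)) ≤ I := by
        calc (2:ℝ) ^ (-(3:ℝ)/2) * (|f t| * t ^ (-(1:ℝ)/2))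
            = (2*t - t) * (|f t| * ((2:ℝ) ^ (-(3:ℝ)/2) * t ^ (-(3:ℝ)/2))) := by
              rw [← e2]; ring
          _ ≤ I := by rw [← e1]; exact hIc2
      have h23 : (0:ℝ) < (2:ℝ) ^ (-(3:ℝ)/2) := Real.rpow_pos_of_pos two_pos _
      have h4 : ((2:ℝ) ^ (-(3:ℝ)/2))⁻¹ ≤ 4 := by
        rw [show (-(3:ℝ)/2) = -((3:ℝ)/2) by norm_num, Real.rpow_neg (by norm_num : (0:ℝ) ≤ 2),
          inv_inv]
        calc (2:ℝ) ^ ((3:ℝ)/2) ≤ (2:ℝ) ^ (2:ℝ) :=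
              Real.rpow_le_rpow_of_exponent_le one_le_two (by norm_num)
          _ = 4 := by
              rw [show (2:ℝ) = ((2:ℕ):ℝ) by norm_num, Real.rpow_natCast]; norm_num
      have h5 : |f t| * t ^ (-(1:ℝ)/2) ≤ 4 * I := by
        have := (le_div_iff₀' h23).2 hIc3
        calc |f t| * t ^ (-(1:ℝ)/2) ≤ I / (2:ℝ) ^ (-(3:ℝ)/2) := this
          _ = I * ((2:ℝ) ^ (-(3:ℝ)/2))⁻¹ := div_eq_mul_inv _ _
          _ ≤ I * 4 := mul_le_mul_of_nonneg_left h4 hI0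
          _ = 4 * I := by ring
      have e3 : t ^ (-(1:ℝ)/2) * t ^ ((1:ℝ)/2) = 1 := by
        rw [← Real.rpow_add ht0]; norm_num
      have h6 : |f t| = (|f t| * t ^ (-(1:ℝ)/2)) * t ^ ((1:ℝ)/2) := by
        rw [mul_assoc, e3, mul_one]
      rw [h6]
      have h7 : (|f t| * t ^ (-(1:ℝ)/2)) * t ^ ((1:ℝ)/2) ≤ (4*I) * t ^ ((1:ℝ)/2) :=
        mul_le_mul_of_nonneg_right h5 hs0
      nlinarith [abs_nonneg (f a)]
  obtain ⟨Cg, hCgdef⟩ : ∃ x : ℝ, x = 4*K^2 + (-(deriv f a)) * (K * (2*a) ^ ((1:ℝ)/2)) := ⟨_, rfl⟩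
  have hga0 : deriv f a ≤ 0 := hf' a hat
  have hgf : ∀ T, a ≤ T → deriv f T * f T ≤ Cg := by
    intro T hTa
    have hT0 : (0:ℝ) < T := lt_of_lt_of_le ha0 hTa
    have hgT0 : deriv f T ≤ 0 := hf' T (le_trans hat hTa)
    have hfT : |f T| ≤ K * T ^ ((1:ℝ)/2) := hfK T hTa
    have hfTn : -(f T) ≤ K * T ^ ((1:ℝ)/2) := le_trans (neg_le_abs _) hfT
    rcases le_or_gt T (2*a) with hsmall | hbig
    · have h2 : deriv f a ≤ deriv f T := hgm (mem_Ici.2 hat) (mem_Ici.2 (le_trans hat hTa)) hTa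
      have h4 : T ^ ((1:ℝ)/2) ≤ (2*a) ^ ((1:ℝ)/2) :=
        Real.rpow_le_rpow hT0.le hsmall (by norm_num)
      have h5 : (0:ℝ) ≤ (2*a) ^ ((1:ℝ)/2) := Real.rpow_nonneg (by linarith) _
      have h6 : |f T| ≤ K * (2*a) ^ ((1:ℝ)/2) :=
        le_trans hfT (mul_le_mul_of_nonneg_left h4 hK0)
      have h7 : -(f T) ≤ K * (2*a) ^ ((1:ℝ)/2) := le_trans (neg_le_abs _) h6
      have h8 : deriv f T * f T ≤ (-(deriv f a)) * (K * (2*a) ^ ((1:ℝ)/2)) := by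
        nlinarith [abs_nonneg (f T)]
      rw [hCgdef]; nlinarith
    · have hha : a ≤ T/2 := by linarith
      have hlt : T/2 < T := by linarith
      obtain ⟨ξ, hξ, hξs⟩ := exists_hasDerivAt_eq_slope f (deriv f) hlt
        hfd.continuous.continuousOn (fun x _ => (hfd x).hasDerivAt)
      have hgm1 : deriv f ξ ≤ deriv f T := hgm
        (mem_Ici.2 (le_trans hat (le_trans hha hξ.1.le)))
        (mem_Ici.2 (le_trans hat (le_trans hha hlt.le))) hξ.2.le
      have hslope : deriv f ξ * (T/2) = f T - f (T/2) := by
        rw [hξs, show T - T/2 = T/2 by ring]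
        field_simp
      have h1 : -(deriv f T) * (T/2) ≤ f (T/2) - f T := by
        have hp : deriv f ξ * (T/2) ≤ deriv f T * (T/2) :=
          mul_le_mul_of_nonneg_right hgm1 (by linarith)
        linarith
      have hfT2 : |f (T/2)| ≤ K * (T/2) ^ ((1:ℝ)/2) := hfK (T/2) hha
      have h4 : (T/2) ^ ((1:ℝ)/2) ≤ T ^ ((1:ℝ)/2) :=
        Real.rpow_le_rpow (by positivity) (by linarith) (by norm_num)
      have hs0 : (0:ℝ) ≤ T ^ ((1:ℝ)/2) := Real.rpow_nonneg hT0.le _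
      have h5 : f (T/2) - f T ≤ 2 * K * T ^ ((1:ℝ)/2) := by
        have q3 : K * (T/2) ^ ((1:ℝ)/2) ≤ K * T ^ ((1:ℝ)/2) :=
          mul_le_mul_of_nonneg_left h4 hK0
        linarith [le_abs_self (f (T/2)), neg_le_abs (f T), hfT, hfT2]
      have e2 : T ^ ((1:ℝ)/2) = T ^ (-(1:ℝ)/2) * T := by
        rw [show ((1:ℝ)/2) = -(1:ℝ)/2 + 1 by norm_num, Real.rpow_add hT0, Real.rpow_one]
      have h6 : -(deriv f T) ≤ 4 * K * T ^ (-(1:ℝ)/2) := by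
        have h7 : -(deriv f T) * T ≤ (4 * K * T ^ (-(1:ℝ)/2)) * T := by
          calc -(deriv f T) * T = (-(deriv f T) * (T/2)) * 2 := by ring
            _ ≤ (2 * K * T ^ ((1:ℝ)/2)) * 2 := by nlinarith
            _ = (4 * K * T ^ (-(1:ℝ)/2)) * T := by rw [e2]; ring
        exact le_of_mul_le_mul_right h7 hT0
      have e3 : T ^ (-(1:ℝ)/2) * T ^ ((1:ℝ)/2) = 1 := by
        rw [← Real.rpow_add hT0]; norm_num
      have h8 : deriv f T * f T ≤ 4 * K^2 := by
        have p2 : (-(deriv f T)) * (-(f T)) ≤ (-(deriv f T)) * (K * T ^ ((1:ℝ)/2)) :=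
          mul_le_mul_of_nonneg_left hfTn (by linarith)
        have p3 : (-(deriv f T)) * (K * T ^ ((1:ℝ)/2))
            ≤ (4 * K * T ^ (-(1:ℝ)/2)) * (K * T ^ ((1:ℝ)/2)) :=
          mul_le_mul_of_nonneg_right h6 (mul_nonneg hK0 hs0)
        have p4 : (4 * K * T ^ (-(1:ℝ)/2)) * (K * T ^ ((1:ℝ)/2))
            = 4 * K^2 * (T ^ (-(1:ℝ)/2) * T ^ ((1:ℝ)/2)) := by ring
        have p5 : deriv f T * f T = (-(deriv f T)) * (-(f T)) := by ring
        rw [p5]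
        calc (-(deriv f T)) * (-(f T)) ≤ (4 * K * T ^ (-(1:ℝ)/2)) * (K * T ^ ((1:ℝ)/2)) :=
              le_trans p2 p3
          _ = 4 * K^2 * (T ^ (-(1:ℝ)/2) * T ^ ((1:ℝ)/2)) := p4
          _ = 4 * K^2 := by rw [e3, mul_one]
      have h9 : (0:ℝ) ≤ (-(deriv f a)) * (K * (2*a) ^ ((1:ℝ)/2)) :=
        mul_nonneg (by linarith) (mul_nonneg hK0 (Real.rpow_nonneg (by linarith) _))
      rw [hCgdef]
      exact le_trans h8 (le_add_of_nonneg_right h9)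
  obtain ⟨C3, hC3def⟩ : ∃ x : ℝ, x = K + |f a| + I/2 := ⟨_, rfl⟩
  obtain ⟨C2, hC2def⟩ : ∃ x : ℝ, x = a ^ ((1:ℝ)/2) * (-(deriv f a)) + (1/2) * C3 := ⟨_, rfl⟩
  obtain ⟨Cb, hCbdef⟩ : ∃ x : ℝ, x = Cg + |deriv f a| * |f a| + K * C2 := ⟨_, rfl⟩
  have key : ∀ T, a ≤ T → (∫ u in a..T, (deriv f u)^2) ≤ Cb := by
    intro T hTa
    have hT0 : (0:ℝ) < T := lt_of_lt_of_le ha0 hTa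
    have huIcc : uIcc a T = Icc a T := uIcc_of_le hTa
    have hposIcc : ∀ x ∈ uIcc a T, (0:ℝ) < x := by
      rw [huIcc]; exact fun x hx => lt_of_lt_of_le ha0 hx.1
    have hrc : ∀ r : ℝ, ContinuousOn (fun u : ℝ => u ^ r) (uIcc a T) := fun r =>
      continuousOn_of_forall_continuousAt (fun x hx =>
        Real.continuousAt_rpow_const x r (Or.inl (ne_of_gt (hposIcc x hx))))
    have ex1 : ∀ x : ℝ, x ^ ((1:ℝ)/2 - 1) = x ^ (-(1:ℝ)/2) := fun x => by norm_num
    have ex2 : ∀ x : ℝ, x ^ (-(1:ℝ)/2 - 1) = x ^ (-(3:ℝ)/2) := fun x => by norm_num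
    have hsT : (0:ℝ) ≤ T ^ ((1:ℝ)/2) := Real.rpow_nonneg hT0.le _
    have hsT' : (0:ℝ) ≤ T ^ (-(1:ℝ)/2) := Real.rpow_nonneg hT0.le _
    have eT : T ^ (-(1:ℝ)/2) * T ^ ((1:ℝ)/2) = 1 := by
      rw [← Real.rpow_add hT0]; norm_num
    -- interval integrability
    have ii_du : IntervalIntegrable (fun x => (1:ℝ)/2 * x ^ ((1:ℝ)/2 - 1)) volume a T :=
      (continuousOn_const.mul (by simpa only [ex1] using hrc (-(1:ℝ)/2))).intervalIntegrable
    have ii_dv : IntervalIntegrable (fun x => -(1:ℝ)/2 * x ^ (-(1:ℝ)/2 - 1)) volume a T :=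
      (continuousOn_const.mul (by simpa only [ex2] using hrc (-(3:ℝ)/2))).intervalIntegrable
    have ii_dvf : IntervalIntegrable (fun x => (-(1:ℝ)/2 * x ^ (-(1:ℝ)/2 - 1)) * f x) volume a T :=
      ((continuousOn_const.mul (by simpa only [ex2] using hrc (-(3:ℝ)/2))).mul
        hfd.continuous.continuousOn).intervalIntegrable
    have ii_absf : IntervalIntegrable (fun x => 1/2 * (|f x| * x ^ (-(3:ℝ)/2))) volume a T :=
      (continuousOn_const.mul ((hfd.continuous.abs.continuousOn).mul (hrc _))).intervalIntegrable
    have iihf : IntervalIntegrable (fun x => deriv (deriv f) x * f x) volume a T :=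
      (hhc.mul hfd.continuous).intervalIntegrable a T
    have ii_lhs : IntervalIntegrable
        (fun x => (-K) * (x ^ ((1:ℝ)/2) * deriv (deriv f) x)) volume a T :=
      (continuousOn_const.mul ((hrc _).mul hhc.continuousOn)).intervalIntegrable
    -- integration by parts identities
    have E1 : (∫ x in a..T, deriv f x * deriv f x)
        = deriv f T * f T - deriv f a * f a - ∫ x in a..T, deriv (deriv f) x * f x :=
      intervalIntegral.integral_mul_deriv_eq_deriv_mul
        (fun x _ => (hgd x).hasDerivAt) (fun x _ => (hfd x).hasDerivAt)
        (hhc.intervalIntegrable a T) (hgc.intervalIntegrable a T)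
    have E2 : (∫ x in a..T, x ^ ((1:ℝ)/2) * deriv (deriv f) x)
        = T ^ ((1:ℝ)/2) * deriv f T - a ^ ((1:ℝ)/2) * deriv f a
          - ∫ x in a..T, ((1:ℝ)/2 * x ^ ((1:ℝ)/2 - 1)) * deriv f x :=
      intervalIntegral.integral_mul_deriv_eq_deriv_mul
        (fun x hx => Real.hasDerivAt_rpow_const (Or.inl (ne_of_gt (hposIcc x hx))))
        (fun x _ => (hgd x).hasDerivAt)
        ii_du (hhc.intervalIntegrable a T)
    have E3 : (∫ x in a..T, x ^ (-(1:ℝ)/2) * deriv f x)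
        = T ^ (-(1:ℝ)/2) * f T - a ^ (-(1:ℝ)/2) * f a
          - ∫ x in a..T, (-(1:ℝ)/2 * x ^ (-(1:ℝ)/2 - 1)) * f x :=
      intervalIntegral.integral_mul_deriv_eq_deriv_mul
        (fun x hx => Real.hasDerivAt_rpow_const (Or.inl (ne_of_gt (hposIcc x hx))))
        (fun x _ => (hfd x).hasDerivAt)
        ii_dv (hgc.intervalIntegrable a T)
    -- bound the last integral in E3
    have hlast : (∫ x in a..T, (-(1:ℝ)/2 * x ^ (-(1:ℝ)/2 - 1)) * f x) ≤ I/2 := by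
      have hmono : ∀ x ∈ Icc a T, (-(1:ℝ)/2 * x ^ (-(1:ℝ)/2 - 1)) * f x
          ≤ 1/2 * (|f x| * x ^ (-(3:ℝ)/2)) := by
        intro x hx
        have hx0 : (0:ℝ) < x := lt_of_lt_of_le ha0 hx.1
        rw [ex2]
        have h1 : (0:ℝ) ≤ x ^ (-(3:ℝ)/2) := Real.rpow_nonneg hx0.le _
        have h3 : (0:ℝ) ≤ x ^ (-(3:ℝ)/2) * (|f x| + f x) :=
          mul_nonneg h1 (by linarith [neg_abs_le (f x)])
        nlinarith [h3]
      calc (∫ x in a..T, (-(1:ℝ)/2 * x ^ (-(1:ℝ)/2 - 1)) * f x)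
          ≤ ∫ x in a..T, 1/2 * (|f x| * x ^ (-(3:ℝ)/2)) :=
            intervalIntegral.integral_mono_on hTa ii_dvf ii_absf hmono
        _ = 1/2 * ∫ x in a..T, |f x| * x ^ (-(3:ℝ)/2) :=
            intervalIntegral.integral_const_mul _ _
        _ ≤ I/2 := by have := htail a T ha1; linarith
    -- bound -J3
    have hq1 : -(T ^ (-(1:ℝ)/2) * f T) ≤ K := by
      have h1 : -(f T) ≤ K * T ^ ((1:ℝ)/2) := le_trans (neg_le_abs _) (hfK T hTa)
      have h2 : T ^ (-(1:ℝ)/2) * (-(f T)) ≤ T ^ (-(1:ℝ)/2) * (K * T ^ ((1:ℝ)/2)) :=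
        mul_le_mul_of_nonneg_left h1 hsT'
      calc -(T ^ (-(1:ℝ)/2) * f T) = T ^ (-(1:ℝ)/2) * (-(f T)) := by ring
        _ ≤ T ^ (-(1:ℝ)/2) * (K * T ^ ((1:ℝ)/2)) := h2
        _ = K * (T ^ (-(1:ℝ)/2) * T ^ ((1:ℝ)/2)) := by ring
        _ = K := by rw [eT, mul_one]
    have hq2 : a ^ (-(1:ℝ)/2) * f a ≤ |f a| := by
      have h1 : a ^ (-(1:ℝ)/2) ≤ 1 := Real.rpow_le_one_of_one_le_of_nonpos ha1 (by norm_num)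
      have h2 : (0:ℝ) ≤ a ^ (-(1:ℝ)/2) := Real.rpow_nonneg ha0.le _
      calc a ^ (-(1:ℝ)/2) * f a ≤ a ^ (-(1:ℝ)/2) * |f a| :=
            mul_le_mul_of_nonneg_left (le_abs_self _) h2
        _ ≤ 1 * |f a| := mul_le_mul_of_nonneg_right h1 (abs_nonneg _)
        _ = |f a| := one_mul _
    have hB3 : -(∫ x in a..T, x ^ (-(1:ℝ)/2) * deriv f x) ≤ C3 := by
      rw [hC3def]; rw [E3]; linarith
    -- bound E2 integral
    have hB2 : (∫ x in a..T, x ^ ((1:ℝ)/2) * deriv (deriv f) x) ≤ C2 := by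
      have hp1 : T ^ ((1:ℝ)/2) * deriv f T ≤ 0 :=
        mul_nonpos_of_nonneg_of_nonpos hsT (hf' T (le_trans hat hTa))
      have ecg : ∀ x : ℝ, ((1:ℝ)/2 * x ^ ((1:ℝ)/2 - 1)) * deriv f x
          = (1:ℝ)/2 * (x ^ (-(1:ℝ)/2) * deriv f x) := fun x => by rw [ex1]; ring
      rw [E2]
      simp only [ecg]
      rw [intervalIntegral.integral_const_mul]
      rw [hC2def]
      linarith
    -- final combination
    have esq : (fun u => (deriv f u)^2) = fun u => deriv f u * deriv f u :=
      funext fun u => by ring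
    rw [esq, E1]
    have hb1 : deriv f T * f T ≤ Cg := hgf T hTa
    have hb2 : -(deriv f a * f a) ≤ |deriv f a| * |f a| := by
      rw [← abs_mul]; exact neg_le_abs _
    have hb3 : -(∫ x in a..T, deriv (deriv f) x * f x) ≤ K * C2 := by
      have hmono2 : ∀ x ∈ Icc a T, (-K) * (x ^ ((1:ℝ)/2) * deriv (deriv f) x)
          ≤ deriv (deriv f) x * f x := by
        intro x hx
        have hx0 : (0:ℝ) < x := lt_of_lt_of_le ha0 hx.1
        have hhx : (0:ℝ) ≤ deriv (deriv f) x := hf'' x (le_trans hat hx.1)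
        have hfl : -(K * x ^ ((1:ℝ)/2)) ≤ f x := by
          have := hfK x hx.1
          linarith [neg_abs_le (f x)]
        calc (-K) * (x ^ ((1:ℝ)/2) * deriv (deriv f) x)
            = deriv (deriv f) x * (-(K * x ^ ((1:ℝ)/2))) := by ring
          _ ≤ deriv (deriv f) x * f x := mul_le_mul_of_nonneg_left hfl hhx
      have hm := intervalIntegral.integral_mono_on hTa ii_lhs iihf hmono2
      rw [intervalIntegral.integral_const_mul] at hm
      have hKC : K * (∫ x in a..T, x ^ ((1:ℝ)/2) * deriv (deriv f) x) ≤ K * C2 :=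
        mul_le_mul_of_nonneg_left hB2 hK0
      have h9 : -(∫ x in a..T, deriv (deriv f) x * f x)
          ≤ K * (∫ x in a..T, x ^ ((1:ℝ)/2) * deriv (deriv f) x) := by linarith
      linarith
    rw [hCbdef]
    linarith
  -- assemble integrability
  have hnorm : ∀ T : ℝ, a ≤ T → (∫ u in a..T, ‖(deriv f u)^2‖) ≤ Cb := by
    intro T hTa
    have : (fun u : ℝ => ‖(deriv f u)^2‖) = fun u => (deriv f u)^2 :=
      funext fun u => by rw [Real.norm_eq_abs, abs_of_nonneg (sq_nonneg _)]
    rw [this]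
    exact key T hTa
  have hIoi : IntegrableOn (fun s => (deriv f s)^2) (Ioi a) := by
    apply integrableOn_Ioi_of_intervalIntegral_norm_bounded (b := fun T : ℝ => T)
      (l := Filter.atTop) Cb a
    · intro T
      exact ((hgc.pow 2).integrableOn_Ioc)
    · exact Filter.tendsto_id
    · exact Filter.eventually_atTop.2 ⟨a, fun T hT => hnorm T hT⟩
  have hIcc : IntegrableOn (fun s => (deriv f s)^2) (Icc t₀ a) :=
    (hgc.pow 2).integrableOn_Icc
  have hsub : Ici t₀ ⊆ Icc t₀ a ∪ Ioi a := by
    intro x hx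
    rcases le_or_gt x a with hxa | hxa
    · exact Or.inl ⟨hx, hxa⟩
    · exact Or.inr hxa
  exact (hIcc.union hIoi).mono_set hsub
end

section
/- If f : [0,∞) → ℝ is nonincreasing, convex, and satisfies ∫₁^∞ |f(t)| t^(-3/2) dt < ∞, then √T · |f'(T)| → 0 as T → ∞ (where f' denotes the right derivative, assumed to exist and be continuous). -/
open MeasureTheory Set Filter

/-- If `f : [0,∞) → ℝ` is C¹, nonincreasing, convex, and satisfies the integral test
`∫₁^∞ |f(t)| t^(-3/2) dt < ∞`, then `√T · |f'(T)| → 0` as `T → ∞`. -/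
theorem stmt2 (f : ℝ → ℝ)
    (hf : ContDiff ℝ 1 f)
    (hmono : ∀ s, 0 ≤ s → deriv f s ≤ 0)
    (hconv : ConvexOn ℝ (Ici (0:ℝ)) f)
    (htest : IntegrableOn (fun t => |f t| * t ^ (-(3:ℝ)/2)) (Ici (1:ℝ))) :
    Tendsto (fun T => Real.sqrt T * |deriv f T|) atTop (nhds 0) := by
  have hdiff : Differentiable ℝ f := hf.differentiable one_ne_zero
  set g : ℝ → ℝ := fun t => |f t| * t ^ (-(3:ℝ)/2) with hg
  have hgpos : ∀ t : ℝ, 0 < t → 0 ≤ g t := fun t ht =>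
    mul_nonneg (abs_nonneg _) (Real.rpow_pos_of_pos ht _).le
  have hii : ∀ {a b : ℝ}, 1 ≤ a → a ≤ b → IntervalIntegrable g volume a b := by
    intro a b ha hab
    apply (htest.mono_set ?_).intervalIntegrable
    rw [uIcc_of_le hab]
    exact fun x hx => le_trans ha hx.1
  -- the tail pieces `A T = ∫_T^{2T} g` tend to 0
  have hIoi : IntegrableOn g (Ioi 1) := htest.mono_set Ioi_subset_Ici_self
  have hF : Tendsto (fun T : ℝ => ∫ x in (1:ℝ)..T, g x) atTop
      (nhds (∫ x in Ioi (1:ℝ), g x)) :=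
    intervalIntegral_tendsto_integral_Ioi 1 hIoi tendsto_id
  set A : ℝ → ℝ := fun T => ∫ x in T..(2*T), g x with hA
  have h2t : Tendsto (fun T : ℝ => 2*T) atTop atTop := tendsto_id.const_mul_atTop two_pos
  have hA0 : Tendsto A atTop (nhds 0) := by
    have h1 := (hF.comp h2t).sub hF
    rw [sub_self] at h1
    apply h1.congr'
    filter_upwards [eventually_ge_atTop (1:ℝ)] with T hT
    have h2T1 : (1:ℝ) ≤ 2*T := by linarith
    exact intervalIntegral.integral_interval_sub_left (hii le_rfl h2T1)
      (hii le_rfl hT)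
  have hAnn : ∀ T : ℝ, 1 ≤ T → 0 ≤ A T := fun T hT =>
    intervalIntegral.integral_nonneg (by linarith) (fun t ht => hgpos t (by
      rcases ht with ⟨h1, _⟩; linarith))
  -- f is antitone on [0,∞)
  have hanti : AntitoneOn f (Ici 0) := by
    apply antitoneOn_of_deriv_nonpos (convex_Ici 0) hdiff.continuous.continuousOn
      (fun x _ => (hdiff x).differentiableWithinAt)
    intro x hx
    rw [interior_Ici] at hx
    exact hmono x (le_of_lt hx)
  -- sqrt facts
  have hs2 : Real.sqrt 2 * Real.sqrt 2 = 2 := Real.mul_self_sqrt (by norm_num)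
  have hs2le : Real.sqrt 2 ≤ 3/2 := by
    rw [show (3:ℝ)/2 = Real.sqrt ((3/2)^2) from (Real.sqrt_sq (by norm_num)).symm]
    exact Real.sqrt_le_sqrt (by norm_num)
  -- key lower bound
  have key : ∀ T : ℝ, 1 ≤ T → ∀ m : ℝ, 0 ≤ m → (∀ t ∈ Icc T (2*T), m ≤ |f t|) →
      m / Real.sqrt T ≤ 3 * A T := by
    intro T hT m hm hmf
    have hT0 : (0:ℝ) < T := by linarith
    have hsT : 0 < Real.sqrt T := Real.sqrt_pos.mpr hT0
    have h2T : (0:ℝ) < 2*T := by linarith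
    have hs2T : Real.sqrt (2*T) = Real.sqrt 2 * Real.sqrt T := Real.sqrt_mul (by norm_num) T
    have hs2T0 : 0 < Real.sqrt (2*T) := Real.sqrt_pos.mpr h2T
    have hpt : ∀ t ∈ Icc T (2*T), m * ((2*T) * Real.sqrt (2*T))⁻¹ ≤ g t := by
      intro t ht
      have ht0 : 0 < t := lt_of_lt_of_le hT0 ht.1
      have hrw : t ^ (-(3:ℝ)/2) = (t * Real.sqrt t)⁻¹ := by
        rw [show -(3:ℝ)/2 = -(1 + 1/2) by norm_num, Real.rpow_neg ht0.le,
          Real.rpow_add ht0, Real.rpow_one, ← Real.sqrt_eq_rpow]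
      show m * ((2*T) * Real.sqrt (2*T))⁻¹ ≤ |f t| * t ^ (-(3:ℝ)/2)
      rw [hrw]
      apply mul_le_mul (hmf t ht) _ (by positivity) (abs_nonneg _)
      apply inv_anti₀ (by positivity)
      exact mul_le_mul ht.2 (Real.sqrt_le_sqrt ht.2) (Real.sqrt_nonneg _) h2T.le
    have hlow : T * (m * ((2*T) * Real.sqrt (2*T))⁻¹) ≤ A T := by
      have h1 := intervalIntegral.integral_mono_on (by linarith : T ≤ 2*T)
        intervalIntegrable_const (hii hT (by linarith)) hpt
      rw [intervalIntegral.integral_const] at h1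
      have : (2*T - T) • (m * ((2*T) * Real.sqrt (2*T))⁻¹)
          = T * (m * ((2*T) * Real.sqrt (2*T))⁻¹) := by
        rw [smul_eq_mul]; ring
      rw [this] at h1
      exact h1
    have heq : m / Real.sqrt T = 2 * Real.sqrt 2 *
        (T * (m * ((2*T) * Real.sqrt (2*T))⁻¹)) := by
      rw [hs2T]
      have hTT : Real.sqrt T * Real.sqrt T = T := Real.mul_self_sqrt hT0.le
      field_simp
    rw [heq]
    calc 2 * Real.sqrt 2 * (T * (m * ((2*T) * Real.sqrt (2*T))⁻¹))
        ≤ 3 * (T * (m * ((2*T) * Real.sqrt (2*T))⁻¹)) := by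
          apply mul_le_mul_of_nonneg_right (by nlinarith) (by positivity)
      _ ≤ 3 * A T := by linarith [hlow]
  -- |f S| / √S → 0
  have hh : Tendsto (fun S : ℝ => |f S| / Real.sqrt S) atTop (nhds 0) := by
    have hhalf : Tendsto (fun S : ℝ => S/2) atTop atTop :=
      tendsto_id.atTop_div_const two_pos
    have hB : Tendsto (fun S : ℝ => 3 * (A S + A (S/2))) atTop (nhds 0) := by
      have := (hA0.add (hA0.comp hhalf)).const_mul (3:ℝ)
      simpa using this
    have hnn : ∀ᶠ S : ℝ in atTop, 0 ≤ |f S| / Real.sqrt S := by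
      filter_upwards [eventually_gt_atTop (0:ℝ)] with S hS
      positivity
    refine squeeze_zero' hnn ?_ hB
    by_cases hcase : ∀ t : ℝ, 1 ≤ t → 0 ≤ f t
    · filter_upwards [eventually_ge_atTop (2:ℝ)] with S hS
      have hT : 1 ≤ S/2 := by linarith
      have hkey := key (S/2) hT (f S) (hcase S (by linarith)) ?_
      · have h1 : |f S| / Real.sqrt S ≤ f S / Real.sqrt (S/2) := by
          rw [abs_of_nonneg (hcase S (by linarith))]
          apply div_le_div_of_nonneg_left (hcase S (by linarith))
            (Real.sqrt_pos.mpr (by linarith)) (Real.sqrt_le_sqrt (by linarith))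
        have h2 : A (S/2) ≤ A S + A (S/2) := by linarith [hAnn S (by linarith)]
        calc |f S| / Real.sqrt S ≤ f S / Real.sqrt (S/2) := h1
          _ ≤ 3 * A (S/2) := hkey
          _ ≤ 3 * (A S + A (S/2)) := by linarith
      · intro t ht
        have ht1 : (1:ℝ) ≤ t := by
          rcases ht with ⟨h1, _⟩; linarith
        have hts : t ≤ S := by
          rcases ht with ⟨_, h2⟩; linarith
        rw [abs_of_nonneg (hcase t ht1)]
        exact hanti (mem_Ici.mpr (by linarith)) (mem_Ici.mpr (by linarith)) hts
    · push_neg at hcase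
      obtain ⟨t0, ht0, hft0⟩ := hcase
      filter_upwards [eventually_ge_atTop (max t0 2)] with S hS
      have hSt0 : t0 ≤ S := le_trans (le_max_left _ _) hS
      have hS2 : (2:ℝ) ≤ S := le_trans (le_max_right _ _) hS
      have hfS : f S < 0 := lt_of_le_of_lt
        (hanti (mem_Ici.mpr (by linarith))
          (mem_Ici.mpr (by linarith)) hSt0) hft0
      have hkey := key S (by linarith) |f S| (abs_nonneg _) ?_
      · calc |f S| / Real.sqrt S ≤ 3 * A S := hkey
          _ ≤ 3 * (A S + A (S/2)) := by
            have := hAnn (S/2) (by linarith)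
            linarith
      · intro t ht
        have hft : f t ≤ f S := hanti (mem_Ici.mpr (by linarith))
          (mem_Ici.mpr (by rcases ht with ⟨h1, _⟩; linarith)) ht.1
        rw [abs_of_nonpos hfS.le, abs_of_nonpos (by linarith)]
        linarith
  -- final squeeze
  have hnn2 : ∀ᶠ T : ℝ in atTop, 0 ≤ Real.sqrt T * |deriv f T| := by
    filter_upwards with T
    positivity
  have hhalf : Tendsto (fun S : ℝ => S/2) atTop atTop :=
    tendsto_id.atTop_div_const two_pos
  have hbound : Tendsto (fun T : ℝ => 2*(|f (T/2)| / Real.sqrt (T/2))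
      + 2*(|f T| / Real.sqrt T)) atTop (nhds 0) := by
    have := ((hh.comp hhalf).const_mul (2:ℝ)).add (hh.const_mul (2:ℝ))
    simpa using this
  refine squeeze_zero' hnn2 ?_ hbound
  filter_upwards [eventually_ge_atTop (2:ℝ)] with T hT
  have hT0 : (0:ℝ) < T := by linarith
  have hsT : 0 < Real.sqrt T := Real.sqrt_pos.mpr hT0
  have hTT : Real.sqrt T * Real.sqrt T = T := Real.mul_self_sqrt hT0.le
  have hsT2 : 0 < Real.sqrt (T/2) := Real.sqrt_pos.mpr (by linarith)
  have hds := hconv.slope_le_deriv (mem_Ici.mpr (by linarith : (0:ℝ) ≤ T/2))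
    (mem_Ici.mpr hT0.le) (by linarith : T/2 < T) (hdiff T)
  rw [slope_def_field] at hds
  have hd : f T - f (T/2) ≤ deriv f T * (T/2) := by
    rw [div_le_iff₀ (by linarith : (0:ℝ) < T - T/2)] at hds
    nlinarith [hds]
  have habs : |deriv f T| = -deriv f T := abs_of_nonpos (hmono T hT0.le)
  have hTs : T / Real.sqrt T = Real.sqrt T := by
    rw [div_eq_iff hsT.ne']; exact hTT.symm
  have hmain : Real.sqrt T * |deriv f T| ≤ (|f (T/2)| + |f T|) * (2 / Real.sqrt T) := by
    rw [habs]
    have h1 : -(deriv f T) * (T/2) ≤ |f (T/2)| + |f T| := by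
      have h2 := le_abs_self (f (T/2))
      have h3 := neg_abs_le (f T)
      linarith
    have heq : Real.sqrt T * -(deriv f T) = (-(deriv f T) * (T/2)) * (2 / Real.sqrt T) := by
      rw [show (-(deriv f T) * (T/2)) * (2/Real.sqrt T)
        = -(deriv f T) * (T / Real.sqrt T) by ring, hTs]
      ring
    rw [heq]
    exact mul_le_mul_of_nonneg_right h1 (by positivity)
  have h4 : |f (T/2)| / Real.sqrt T ≤ |f (T/2)| / Real.sqrt (T/2) :=
    div_le_div_of_nonneg_left (abs_nonneg _) hsT2 (Real.sqrt_le_sqrt (by linarith))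
  have h5 : (|f (T/2)| + |f T|) * (2 / Real.sqrt T)
      = 2*(|f (T/2)| / Real.sqrt T) + 2*(|f T| / Real.sqrt T) := by ring
  rw [h5] at hmain
  linarith
end

section
/- If f : [0,∞) → ℝ is convex and nonincreasing with ∫₁^∞ |f(t)| t^(-3/2) dt < ∞, then f(t)/√t → 0 as t → ∞. -/
open MeasureTheory Set Filter

theorem sqrt_tendsto_atTop' : Tendsto Real.sqrt atTop atTop := by
  apply tendsto_atTop_atTop.mpr
  intro b
  refine ⟨b ^ 2, fun x hx => ?_⟩
  calc b ≤ |b| := le_abs_self b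
    _ = Real.sqrt (b ^ 2) := (Real.sqrt_sq_eq_abs b).symm
    _ ≤ Real.sqrt x := Real.sqrt_le_sqrt hx

/-- If `f : [0,∞) → ℝ` is convex and nonincreasing with
`∫₁^∞ |f(t)| t^(-3/2) dt < ∞`, then `f(t)/√t → 0` as `t → ∞`. -/
theorem stmt3 (f : ℝ → ℝ)
    (hconv : ConvexOn ℝ (Ici (0:ℝ)) f)
    (hmono : AntitoneOn f (Ici (0:ℝ)))
    (htest : IntegrableOn (fun t => |f t| * t ^ (-(3:ℝ)/2)) (Ici (1:ℝ))) :
    Tendsto (fun t => f t / Real.sqrt t) atTop (nhds 0) := by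
  set I : ℝ → ℝ := fun t => |f t| * t ^ (-(3:ℝ)/2) with hIdef
  by_cases hneg : ∃ t0, 0 ≤ t0 ∧ f t0 < 0
  · -- f is eventually negative
    obtain ⟨t0, ht0, hft0⟩ := hneg
    set a := max t0 1 with ha
    -- integrability on subintervals
    have hsub : ∀ t u : ℝ, 1 ≤ t → t ≤ u → IntervalIntegrable I volume t u := by
      intro t u ht htu
      apply IntegrableOn.intervalIntegrable
      apply htest.mono_set
      intro x hx
      rw [uIcc_of_le htu] at hx
      exact le_trans ht hx.1
    -- tail of integral tends to 0
    have hF : Tendsto (fun t => ∫ s in (1:ℝ)..t, I s) atTop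
        (nhds (∫ s in Ioi (1:ℝ), I s)) :=
      intervalIntegral_tendsto_integral_Ioi 1 (htest.mono_set Ioi_subset_Ici_self) tendsto_id
    have h2t : Tendsto (fun t : ℝ => 2 * t) atTop atTop :=
      Tendsto.const_mul_atTop (by norm_num) tendsto_id
    have hG : Tendsto (fun t => ((∫ s in (1:ℝ)..(2*t), I s) - ∫ s in (1:ℝ)..t, I s)
        / (2 - Real.sqrt 2)) atTop (nhds 0) := by
      have h := ((hF.comp h2t).sub hF).div_const (2 - Real.sqrt 2)
      simpa using h
    have hc : (0:ℝ) < 2 - Real.sqrt 2 := by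
      nlinarith [Real.sq_sqrt (show (0:ℝ) ≤ 2 by norm_num), Real.sqrt_nonneg 2]
    -- key pointwise bound
    have key : ∀ t : ℝ, a ≤ t → |f t / Real.sqrt t| ≤
        ((∫ s in (1:ℝ)..(2*t), I s) - ∫ s in (1:ℝ)..t, I s) / (2 - Real.sqrt 2) := by
      intro t hat
      have ht1 : (1:ℝ) ≤ t := le_trans (le_max_right _ _) hat
      have ht0' : t0 ≤ t := le_trans (le_max_left _ _) hat
      have htpos : (0:ℝ) < t := by linarith
      have hft : f t < 0 := lt_of_le_of_lt (hmono ht0 htpos.le ht0') hft0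
      -- the difference equals the integral over [t, 2t]
      have hdiff : (∫ s in (1:ℝ)..(2*t), I s) - ∫ s in (1:ℝ)..t, I s
          = ∫ s in t..(2*t), I s := by
        have h1t : IntervalIntegrable I volume 1 t := hsub 1 t le_rfl ht1
        have ht2t : IntervalIntegrable I volume t (2*t) := hsub t (2*t) ht1 (by linarith)
        rw [← intervalIntegral.integral_add_adjacent_intervals h1t ht2t]
        ring
      have h02t : (0:ℝ) ∉ uIcc t (2*t) := by
        rw [uIcc_of_le (by linarith)]
        intro h
        exact absurd h.1 (by linarith)
      -- lower bound the integral
      have hmono' : ∫ s in t..(2*t), |f t| * s ^ (-(3:ℝ)/2) ≤ ∫ s in t..(2*t), I s := by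
        apply intervalIntegral.integral_mono_on (by linarith)
        · exact (intervalIntegral.intervalIntegrable_rpow (Or.inr h02t)).const_mul _
        · exact hsub t (2*t) ht1 (by linarith)
        · intro s hs
          have hs0 : (0:ℝ) < s := lt_of_lt_of_le htpos hs.1
          have hfst : f s ≤ f t := hmono htpos.le hs0.le hs.1
          have : |f t| ≤ |f s| := by
            rw [abs_of_neg hft, abs_of_neg (lt_of_le_of_lt hfst hft)]
            linarith
          exact mul_le_mul_of_nonneg_right this (Real.rpow_nonneg hs0.le _)
      have hcomp : ∫ s in t..(2*t), |f t| * s ^ (-(3:ℝ)/2)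
          = |f t| * (((2*t) ^ ((-(3:ℝ)/2) + 1) - t ^ ((-(3:ℝ)/2) + 1)) / ((-(3:ℝ)/2) + 1)) := by
        rw [intervalIntegral.integral_const_mul,
          integral_rpow (Or.inr ⟨by norm_num, h02t⟩)]
      have hsqt : (0:ℝ) < Real.sqrt t := Real.sqrt_pos.mpr htpos
      have hsq2 : (0:ℝ) < Real.sqrt 2 := by positivity
      have h2 : Real.sqrt 2 * Real.sqrt 2 = 2 := Real.mul_self_sqrt (by norm_num)
      -- evaluate the rpow expression
      have hval : ((2*t) ^ ((-(3:ℝ)/2) + 1) - t ^ ((-(3:ℝ)/2) + 1)) / ((-(3:ℝ)/2) + 1)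
          = (2 - Real.sqrt 2) / Real.sqrt t := by
        have h1 : ((-(3:ℝ)/2) + 1) = -((1:ℝ)/2) := by norm_num
        rw [h1, Real.rpow_neg (by positivity), Real.rpow_neg htpos.le]
        have hs2 : (2*t) ^ ((1:ℝ)/2) = Real.sqrt 2 * Real.sqrt t := by
          rw [← Real.sqrt_eq_rpow, Real.sqrt_mul (by norm_num)]
        have hst : t ^ ((1:ℝ)/2) = Real.sqrt t := (Real.sqrt_eq_rpow t).symm
        rw [hs2, hst]
        field_simp
        ring_nf
        nlinarith [h2, hsqt, hsq2]
      have habs : |f t / Real.sqrt t| = |f t| / Real.sqrt t := by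
        rw [abs_div, abs_of_pos hsqt]
      rw [habs, hdiff, div_le_div_iff₀ hsqt hc]
      have hkey : |f t| * ((2 - Real.sqrt 2) / Real.sqrt t) ≤ ∫ s in t..(2*t), I s :=
        calc |f t| * ((2 - Real.sqrt 2) / Real.sqrt t)
            = ∫ s in t..(2*t), |f t| * s ^ (-(3:ℝ)/2) := by rw [hcomp, hval]
          _ ≤ _ := hmono'
      calc |f t| * (2 - Real.sqrt 2)
          = |f t| * ((2 - Real.sqrt 2) / Real.sqrt t) * Real.sqrt t := by field_simp
        _ ≤ (∫ s in t..(2*t), I s) * Real.sqrt t :=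
            mul_le_mul_of_nonneg_right hkey hsqt.le
    -- conclude by squeezing
    have habs : Tendsto (fun t => |f t / Real.sqrt t|) atTop (nhds 0) :=
      squeeze_zero' (Eventually.of_forall fun t => abs_nonneg _)
        (eventually_atTop.mpr ⟨a, key⟩) hG
    exact (tendsto_zero_iff_abs_tendsto_zero _).mpr habs
  · -- f is nonnegative everywhere on [0, ∞)
    push_neg at hneg
    have hbd : ∀ t : ℝ, 1 ≤ t → |f t / Real.sqrt t| ≤ f 0 / Real.sqrt t := by
      intro t ht
      have htpos : (0:ℝ) < t := by linarith
      have h0 : 0 ≤ f t := hneg t htpos.le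
      have h1 : f t ≤ f 0 := hmono (mem_Ici.mpr le_rfl) htpos.le htpos.le
      have hsqt : (0:ℝ) < Real.sqrt t := Real.sqrt_pos.mpr htpos
      rw [abs_div, abs_of_pos hsqt, abs_of_nonneg h0]
      gcongr
    have hlim : Tendsto (fun t => f 0 / Real.sqrt t) atTop (nhds 0) :=
      Tendsto.div_atTop tendsto_const_nhds sqrt_tendsto_atTop'
    have habs : Tendsto (fun t => |f t / Real.sqrt t|) atTop (nhds 0) :=
      squeeze_zero' (Eventually.of_forall fun t => abs_nonneg _)
        (eventually_atTop.mpr ⟨1, hbd⟩) hlim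
    exact (tendsto_zero_iff_abs_tendsto_zero _).mpr habs
end

section
/- Slepian-type inequality: Let B be a standard Brownian motion, f : [0,∞) → ℝ measurable, and 0 < t₀ < T. Then P(B_t ≤ f(t) for all t ∈ [0,T]) ≥ P(B_t ≤ f(t) for all t ∈ [0,t₀]) · P(B_t ≤ f(t) for all t ∈ [t₀,T]). -/
open MeasureTheory ProbabilityTheory Filter Set

structure IsBrownianMotion {Ω : Type*} [MeasurableSpace Ω] (P : Measure Ω)
    (B : ℝ → Ω → ℝ) : Prop where
  isProb : IsProbabilityMeasure P
  start : ∀ ω, B 0 ω = 0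
  cont : ∀ ω, Continuous fun t => B t ω
  meas : ∀ t, Measurable (B t)
  incr : ∀ s t : ℝ, 0 ≤ s → s ≤ t →
    P.map (fun ω => B t ω - B s ω) = gaussianReal 0 (Real.toNNReal (t - s))
  indep : ∀ (n : ℕ) (t : ℕ → ℝ), Monotone t → 0 ≤ t 0 →
    iIndepFun
      (fun i : Fin n => fun ω => B (t (i + 1)) ω - B (t i) ω) P


lemma bdd_integrable {α : Type*} [MeasurableSpace α] (μ : Measure α) [IsFiniteMeasure μ]
    {f : α → ℝ} (hm : Measurable f) (hb : ∀ x, |f x| ≤ 1) : Integrable f μ :=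
  ⟨hm.aestronglyMeasurable, HasFiniteIntegral.of_bounded (C := 1) (ae_of_all _ hb)⟩

/-- Chebyshev association inequality in one variable. -/
lemma cheb (μ : Measure ℝ) [IsProbabilityMeasure μ] (F G : ℝ → ℝ)
    (hFm : Measurable F) (hGm : Measurable G)
    (hFa : Antitone F) (hGa : Antitone G)
    (hF01 : ∀ x, F x ∈ Icc (0:ℝ) 1) (hG01 : ∀ x, G x ∈ Icc (0:ℝ) 1) :
    (∫ x, F x ∂μ) * (∫ x, G x ∂μ) ≤ ∫ x, F x * G x ∂μ := by
  have habs : ∀ (H : ℝ → ℝ), (∀ x, H x ∈ Icc (0:ℝ) 1) → ∀ x, |H x| ≤ 1 := by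
    intro H h x; rw [abs_le]; constructor <;> linarith [(h x).1, (h x).2]
  have hFi : Integrable F μ := bdd_integrable μ hFm (habs F hF01)
  have hGi : Integrable G μ := bdd_integrable μ hGm (habs G hG01)
  have hFGm : Measurable (fun x => F x * G x) := hFm.mul hGm
  have hFGb : ∀ x, |F x * G x| ≤ 1 := by
    intro x
    rw [abs_mul]
    calc |F x| * |G x| ≤ 1 * 1 := by
          exact mul_le_mul (habs F hF01 x) (habs G hG01 x) (abs_nonneg _) zero_le_one
      _ = 1 := one_mul 1
  have hFGi : Integrable (fun x => F x * G x) μ := bdd_integrable μ hFGm hFGb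
  -- key : double integral of (F x - F y)(G x - G y) over product is nonneg
  have key : 0 ≤ ∫ z : ℝ × ℝ, (F z.1 - F z.2) * (G z.1 - G z.2) ∂(μ.prod μ) := by
    apply integral_nonneg
    intro z
    show (0:ℝ) ≤ (F z.1 - F z.2) * (G z.1 - G z.2)
    rcases le_total z.1 z.2 with h | h
    · nlinarith [hFa h, hGa h]
    · nlinarith [hFa h, hGa h]
  have i1 : Integrable (fun z : ℝ × ℝ => F z.1 * G z.1) (μ.prod μ) :=
    bdd_integrable _ (hFGm.comp measurable_fst) (fun z => hFGb z.1)
  have i2 : Integrable (fun z : ℝ × ℝ => F z.1 * G z.2) (μ.prod μ) :=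
    bdd_integrable _ ((hFm.comp measurable_fst).mul (hGm.comp measurable_snd))
      (fun z => by
        rw [abs_mul]
        calc |F z.1| * |G z.2| ≤ 1 * 1 :=
              mul_le_mul (habs F hF01 _) (habs G hG01 _) (abs_nonneg _) zero_le_one
          _ = 1 := one_mul 1)
  have i3 : Integrable (fun z : ℝ × ℝ => F z.2 * G z.1) (μ.prod μ) :=
    bdd_integrable _ ((hFm.comp measurable_snd).mul (hGm.comp measurable_fst))
      (fun z => by
        rw [abs_mul]
        calc |F z.2| * |G z.1| ≤ 1 * 1 :=
              mul_le_mul (habs F hF01 _) (habs G hG01 _) (abs_nonneg _) zero_le_one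
          _ = 1 := one_mul 1)
  have i4 : Integrable (fun z : ℝ × ℝ => F z.2 * G z.2) (μ.prod μ) :=
    bdd_integrable _ (hFGm.comp measurable_snd) (fun z => hFGb z.2)
  have expand : (∫ z : ℝ × ℝ, (F z.1 - F z.2) * (G z.1 - G z.2) ∂(μ.prod μ))
      = (∫ z : ℝ × ℝ, F z.1 * G z.1 ∂(μ.prod μ))
        - (∫ z : ℝ × ℝ, F z.1 * G z.2 ∂(μ.prod μ))
        - (∫ z : ℝ × ℝ, F z.2 * G z.1 ∂(μ.prod μ))
        + (∫ z : ℝ × ℝ, F z.2 * G z.2 ∂(μ.prod μ)) := by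
    have hz : ∀ z : ℝ × ℝ, (F z.1 - F z.2) * (G z.1 - G z.2)
        = F z.1 * G z.1 - F z.1 * G z.2 - F z.2 * G z.1 + F z.2 * G z.2 := fun z => by ring
    simp_rw [hz]
    have i12 : Integrable (fun z : ℝ × ℝ => F z.1 * G z.1 - F z.1 * G z.2) (μ.prod μ) :=
      i1.sub i2
    have i123 : Integrable
        (fun z : ℝ × ℝ => F z.1 * G z.1 - F z.1 * G z.2 - F z.2 * G z.1) (μ.prod μ) :=
      i12.sub i3
    rw [integral_add i123 i4, integral_sub i12 i3, integral_sub i1 i2]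
  have e1 : (∫ z : ℝ × ℝ, F z.1 * G z.1 ∂(μ.prod μ)) = ∫ x, F x * G x ∂μ := by
    have := integral_prod_mul (μ := μ) (ν := μ) (fun x => F x * G x) (fun _ => (1:ℝ))
    simpa using this
  have e4 : (∫ z : ℝ × ℝ, F z.2 * G z.2 ∂(μ.prod μ)) = ∫ x, F x * G x ∂μ := by
    have := integral_prod_mul (μ := μ) (ν := μ) (fun _ => (1:ℝ)) (fun x => F x * G x)
    simpa using this
  have e2 : (∫ z : ℝ × ℝ, F z.1 * G z.2 ∂(μ.prod μ)) = (∫ x, F x ∂μ) * ∫ x, G x ∂μ :=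
    integral_prod_mul F G
  have e3 : (∫ z : ℝ × ℝ, F z.2 * G z.1 ∂(μ.prod μ)) = (∫ x, F x ∂μ) * ∫ x, G x ∂μ := by
    rw [show (fun z : ℝ × ℝ => F z.2 * G z.1) = fun z : ℝ × ℝ => G z.1 * F z.2 by
      funext z; ring, integral_prod_mul G F]
    ring
  rw [expand, e1, e2, e3, e4] at key
  linarith

section
variable {α : Type*} [MeasurableSpace α]

lemma bdd_integrable' (μ : Measure α) [IsFiniteMeasure μ]
    {f : α → ℝ} (hm : Measurable f) (hb : ∀ x, |f x| ≤ 1) : Integrable f μ :=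
  ⟨hm.aestronglyMeasurable, HasFiniteIntegral.of_bounded (C := 1) (ae_of_all _ hb)⟩

end

lemma icc_abs {a : ℝ} (h : a ∈ Icc (0:ℝ) 1) : |a| ≤ 1 := by
  rw [abs_le]; exact ⟨by linarith [h.1], h.2⟩

lemma icc_mul_abs {a b : ℝ} (ha : a ∈ Icc (0:ℝ) 1) (hb : b ∈ Icc (0:ℝ) 1) : |a * b| ≤ 1 := by
  rw [abs_mul]
  calc |a| * |b| ≤ 1 * 1 := mul_le_mul (icc_abs ha) (icc_abs hb) (abs_nonneg _) zero_le_one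
    _ = 1 := one_mul 1

lemma insertNth_mono {N : ℕ} (i : Fin (N + 1)) {x x' : ℝ} {y y' : Fin N → ℝ}
    (hx : x ≤ x') (hy : y ≤ y') :
    (i.insertNth x y : Fin (N + 1) → ℝ) ≤ i.insertNth x' y' := by
  rw [Fin.insertNth_le_iff]
  refine ⟨?_, ?_⟩
  · rw [Fin.insertNth_apply_same]; exact hx
  · intro j
    dsimp only
    rw [Fin.insertNth_apply_succAbove]
    exact hy j

/-- Harris / FKG inequality for finite products of probability measures on ℝ,
for antitone `[0,1]`-valued functions. -/
lemma harris : ∀ (N : ℕ) (μ : Fin N → Measure ℝ), (∀ i, IsProbabilityMeasure (μ i)) →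
    ∀ F G : (Fin N → ℝ) → ℝ, Measurable F → Measurable G → Antitone F → Antitone G →
    (∀ x, F x ∈ Icc (0:ℝ) 1) → (∀ x, G x ∈ Icc (0:ℝ) 1) →
    (∫ x, F x ∂Measure.pi μ) * (∫ x, G x ∂Measure.pi μ) ≤ ∫ x, F x * G x ∂Measure.pi μ := by
  intro N
  induction N with
  | zero =>
    intro μ hμ F G hFm hGm hFa hGa hF01 hG01
    haveI := hμ
    haveI : IsProbabilityMeasure (Measure.pi μ) := by infer_instance
    have hF : F = fun _ => F default := funext fun x => by rw [Subsingleton.elim x default]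
    have hG : G = fun _ => G default := funext fun x => by rw [Subsingleton.elim x default]
    rw [hF, hG]
    simp [integral_const]
  | succ N ih =>
    intro μ hμ F G hFm hGm hFa hGa hF01 hG01
    haveI := hμ
    set ν : Fin N → Measure ℝ := fun j => μ ((0 : Fin (N + 1)).succAbove j) with hν
    haveI hνP : ∀ i, IsProbabilityMeasure (ν i) := fun i => hμ _
    haveI : IsProbabilityMeasure (Measure.pi ν) := by infer_instance
    haveI : IsProbabilityMeasure (μ 0) := hμ 0
    set e := MeasurableEquiv.piFinSuccAbove (fun _ : Fin (N + 1) => ℝ) 0 with he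
    have hmp : MeasurePreserving e (Measure.pi μ) ((μ 0).prod (Measure.pi ν)) :=
      measurePreserving_piFinSuccAbove μ 0
    have hmps : MeasurePreserving e.symm ((μ 0).prod (Measure.pi ν)) (Measure.pi μ) :=
      hmp.symm e
    have hesymm : ∀ z : ℝ × (Fin N → ℝ), e.symm z = (0 : Fin (N + 1)).insertNth z.1 z.2 := by
      intro z
      rfl
    -- transfer of integrals
    have htrans : ∀ H : (Fin (N + 1) → ℝ) → ℝ,
        ∫ x, H x ∂Measure.pi μ = ∫ z, H (e.symm z) ∂(μ 0).prod (Measure.pi ν) :=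
      fun H => (hmps.integral_comp e.symm.measurableEmbedding H).symm
    set F' : ℝ × (Fin N → ℝ) → ℝ := fun z => F ((0 : Fin (N + 1)).insertNth z.1 z.2) with hF'
    set G' : ℝ × (Fin N → ℝ) → ℝ := fun z => G ((0 : Fin (N + 1)).insertNth z.1 z.2) with hG'
    have hF'm : Measurable F' := by
      have : F' = F ∘ e.symm := by funext z; rw [hF']; simp [hesymm z]
      rw [this]; exact hFm.comp e.symm.measurable
    have hG'm : Measurable G' := by
      have : G' = G ∘ e.symm := by funext z; rw [hG']; simp [hesymm z]
      rw [this]; exact hGm.comp e.symm.measurable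
    set F₁ : ℝ → ℝ := fun x => ∫ y, F' (x, y) ∂Measure.pi ν with hF₁
    set G₁ : ℝ → ℝ := fun x => ∫ y, G' (x, y) ∂Measure.pi ν with hG₁
    have hF₁m : Measurable F₁ :=
      hF'm.stronglyMeasurable.integral_prod_right'.measurable
    have hG₁m : Measurable G₁ :=
      hG'm.stronglyMeasurable.integral_prod_right'.measurable
    have hF₁01 : ∀ x, F₁ x ∈ Icc (0:ℝ) 1 := by
      intro x
      constructor
      · exact integral_nonneg fun y => (hF01 _).1
      · calc (∫ y, F' (x, y) ∂Measure.pi ν) ≤ ∫ _, (1:ℝ) ∂Measure.pi ν := by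
              apply integral_mono
                (bdd_integrable' _ (hF'm.comp measurable_prodMk_left) fun y => icc_abs (hF01 _))
                (integrable_const 1)
              intro y; exact (hF01 _).2
          _ = 1 := by simp
    have hG₁01 : ∀ x, G₁ x ∈ Icc (0:ℝ) 1 := by
      intro x
      constructor
      · exact integral_nonneg fun y => (hG01 _).1
      · calc (∫ y, G' (x, y) ∂Measure.pi ν) ≤ ∫ _, (1:ℝ) ∂Measure.pi ν := by
              apply integral_mono
                (bdd_integrable' _ (hG'm.comp measurable_prodMk_left) fun y => icc_abs (hG01 _))
                (integrable_const 1)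
              intro y; exact (hG01 _).2
          _ = 1 := by simp
    have hF₁a : Antitone F₁ := by
      intro x x' hx
      apply integral_mono
        (bdd_integrable' _ (hF'm.comp measurable_prodMk_left) fun y => icc_abs (hF01 _))
        (bdd_integrable' _ (hF'm.comp measurable_prodMk_left) fun y => icc_abs (hF01 _))
      intro y
      exact hFa (insertNth_mono 0 hx le_rfl)
    have hG₁a : Antitone G₁ := by
      intro x x' hx
      apply integral_mono
        (bdd_integrable' _ (hG'm.comp measurable_prodMk_left) fun y => icc_abs (hG01 _))
        (bdd_integrable' _ (hG'm.comp measurable_prodMk_left) fun y => icc_abs (hG01 _))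
      intro y
      exact hGa (insertNth_mono 0 hx le_rfl)
    -- inner inequality from induction hypothesis
    have hinner : ∀ x : ℝ, F₁ x * G₁ x ≤ ∫ y, F' (x, y) * G' (x, y) ∂Measure.pi ν := by
      intro x
      exact ih ν hνP (fun y => F' (x, y)) (fun y => G' (x, y))
        (hF'm.comp measurable_prodMk_left) (hG'm.comp measurable_prodMk_left)
        (fun y y' hy => hFa (insertNth_mono 0 le_rfl hy))
        (fun y y' hy => hGa (insertNth_mono 0 le_rfl hy))
        (fun y => hF01 _) (fun y => hG01 _)
    -- marginal identities
    have hFmarg : ∫ x, F x ∂Measure.pi μ = ∫ x, F₁ x ∂(μ 0) := by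
      rw [htrans F]
      have : (fun z : ℝ × (Fin N → ℝ) => F (e.symm z)) = F' := by
        funext z; rw [hesymm z]
      rw [show (∫ z, F (e.symm z) ∂(μ 0).prod (Measure.pi ν))
          = ∫ z, F' z ∂(μ 0).prod (Measure.pi ν) by rw [← this]]
      exact integral_prod F' (bdd_integrable' _ hF'm fun z => icc_abs (hF01 _))
    have hGmarg : ∫ x, G x ∂Measure.pi μ = ∫ x, G₁ x ∂(μ 0) := by
      rw [htrans G]
      have : (fun z : ℝ × (Fin N → ℝ) => G (e.symm z)) = G' := by
        funext z; rw [hesymm z]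
      rw [show (∫ z, G (e.symm z) ∂(μ 0).prod (Measure.pi ν))
          = ∫ z, G' z ∂(μ 0).prod (Measure.pi ν) by rw [← this]]
      exact integral_prod G' (bdd_integrable' _ hG'm fun z => icc_abs (hG01 _))
    have hFGmarg : ∫ x, F x * G x ∂Measure.pi μ
        = ∫ x, (∫ y, F' (x, y) * G' (x, y) ∂Measure.pi ν) ∂(μ 0) := by
      rw [htrans (fun x => F x * G x)]
      have : (fun z : ℝ × (Fin N → ℝ) => F (e.symm z) * G (e.symm z))
          = fun z => F' z * G' z := by
        funext z; rw [hesymm z]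
      rw [show (∫ z, F (e.symm z) * G (e.symm z) ∂(μ 0).prod (Measure.pi ν))
          = ∫ z, F' z * G' z ∂(μ 0).prod (Measure.pi ν) by rw [← this]]
      exact integral_prod _ (bdd_integrable' _ (hF'm.mul hG'm)
        fun z => icc_mul_abs (hF01 _) (hG01 _))
    rw [hFmarg, hGmarg, hFGmarg]
    calc (∫ x, F₁ x ∂(μ 0)) * ∫ x, G₁ x ∂(μ 0)
        ≤ ∫ x, F₁ x * G₁ x ∂(μ 0) := by
          -- 1-d Chebyshev association inequality
          exact cheb (μ 0) F₁ G₁ hF₁m hG₁m hF₁a hG₁a hF₁01 hG₁01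
      _ ≤ ∫ x, (∫ y, F' (x, y) * G' (x, y) ∂Measure.pi ν) ∂(μ 0) := by
          apply integral_mono
          · exact bdd_integrable' _ (hF₁m.mul hG₁m)
              fun x => icc_mul_abs (hF₁01 x) (hG₁01 x)
          · refine bdd_integrable' _ ?_ ?_
            · exact (hF'm.mul hG'm).stronglyMeasurable.integral_prod_right'.measurable
            · intro x
              have h1 : (0:ℝ) ≤ ∫ y, F' (x, y) * G' (x, y) ∂Measure.pi ν :=
                integral_nonneg fun y => mul_nonneg (hF01 _).1 (hG01 _).1
              have h2 : (∫ y, F' (x, y) * G' (x, y) ∂Measure.pi ν) ≤ 1 := by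
                calc (∫ y, F' (x, y) * G' (x, y) ∂Measure.pi ν)
                    ≤ ∫ _, (1:ℝ) ∂Measure.pi ν := by
                      apply integral_mono
                        (bdd_integrable' _
                          ((hF'm.mul hG'm).comp measurable_prodMk_left)
                          fun y => icc_mul_abs (hF01 _) (hG01 _))
                        (integrable_const 1)
                      intro y
                      calc F' (x, y) * G' (x, y) ≤ 1 * 1 :=
                            mul_le_mul (hF01 _).2 (hG01 _).2 (hG01 _).1 zero_le_one
                        _ = 1 := one_mul 1
                  _ = 1 := by simp
              rw [abs_le]; exact ⟨by linarith, h2⟩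
          · exact hinner
/-- Measure form of Harris inequality for lower (downward-closed) sets. -/
lemma harris_sets (N : ℕ) (μ : Fin N → Measure ℝ) (hμ : ∀ i, IsProbabilityMeasure (μ i))
    (S T : Set (Fin N → ℝ)) (hSm : MeasurableSet S) (hTm : MeasurableSet T)
    (hSl : ∀ ⦃x y⦄, x ≤ y → y ∈ S → x ∈ S) (hTl : ∀ ⦃x y⦄, x ≤ y → y ∈ T → x ∈ T) :
    Measure.pi μ S * Measure.pi μ T ≤ Measure.pi μ (S ∩ T) := by
  haveI := hμ
  haveI : IsProbabilityMeasure (Measure.pi μ) := by infer_instance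
  set F : (Fin N → ℝ) → ℝ := S.indicator 1 with hF
  set G : (Fin N → ℝ) → ℝ := T.indicator 1 with hG
  have hFm : Measurable F := measurable_one.indicator hSm
  have hGm : Measurable G := measurable_one.indicator hTm
  have hind01 : ∀ (U : Set (Fin N → ℝ)) (x), U.indicator (1 : (Fin N → ℝ) → ℝ) x ∈ Icc (0:ℝ) 1 := by
    intro U x
    by_cases h : x ∈ U
    · rw [Set.indicator_of_mem h]; norm_num
    · rw [Set.indicator_of_notMem h]; norm_num
  have hindA : ∀ (U : Set (Fin N → ℝ)), (∀ ⦃x y⦄, x ≤ y → y ∈ U → x ∈ U) →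
      Antitone (U.indicator (1 : (Fin N → ℝ) → ℝ)) := by
    intro U hU x y hxy
    by_cases hy : y ∈ U
    · have hx : x ∈ U := hU hxy hy
      rw [Set.indicator_of_mem hx, Set.indicator_of_mem hy]
      exact le_refl _
    · rw [Set.indicator_of_notMem hy]
      exact (hind01 U x).1
  have key := harris N μ hμ F G hFm hGm (hindA S hSl) (hindA T hTl) (hind01 S) (hind01 T)
  have hFG : (fun x => F x * G x) = (S ∩ T).indicator 1 := by
    rw [hF, hG, Set.inter_indicator_one]; rfl
  rw [hFG] at key
  rw [hF, hG] at key
  rw [integral_indicator_one hSm, integral_indicator_one hTm,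
    integral_indicator_one (hSm.inter hTm)] at key
  rw [← ENNReal.toReal_le_toReal (by finiteness) (by finiteness), ENNReal.toReal_mul]
  exact key
/-- A countable set capturing near-minimal values of `f` near every point. -/
lemma exists_countable_capture (f : ℝ → ℝ) :
    ∃ D : Set ℝ, D.Countable ∧
      ∀ t : ℝ, ∀ ε > (0:ℝ), ∀ δ > (0:ℝ), ∃ s ∈ D, |s - t| < δ ∧ f s < f t + ε := by
  classical
  set g : ℚ × ℚ × ℚ → Set ℝ := fun pqr =>
    if h : ∃ s : ℝ, s ∈ Ioo ((pqr.1 : ℝ)) ((pqr.2.1 : ℝ)) ∧ f s < (pqr.2.2 : ℝ)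
    then {h.choose} else ∅ with hg
  refine ⟨⋃ pqr, g pqr, ?_, ?_⟩
  · apply Set.countable_iUnion
    intro pqr
    by_cases h : ∃ s : ℝ, s ∈ Ioo ((pqr.1 : ℝ)) ((pqr.2.1 : ℝ)) ∧ f s < (pqr.2.2 : ℝ)
    · have : g pqr = {h.choose} := by rw [hg]; exact dif_pos h
      rw [this]; exact Set.countable_singleton _
    · have : g pqr = ∅ := by rw [hg]; exact dif_neg h
      rw [this]; exact Set.countable_empty
  · intro t ε hε δ hδ
    obtain ⟨p, hp1, hp2⟩ := exists_rat_btwn (show t - δ < t by linarith)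
    obtain ⟨q, hq1, hq2⟩ := exists_rat_btwn (show t < t + δ by linarith)
    obtain ⟨r, hr1, hr2⟩ := exists_rat_btwn (show f t < f t + ε by linarith)
    have hex : ∃ s : ℝ, s ∈ Ioo ((p : ℝ)) ((q : ℝ)) ∧ f s < (r : ℝ) :=
      ⟨t, ⟨hp2, hq1⟩, hr1⟩
    refine ⟨hex.choose, ?_, ?_, ?_⟩
    · apply Set.mem_iUnion.mpr ⟨(p, q, r), ?_⟩
      rw [hg]
      simp only [dif_pos hex]
      exact Set.mem_singleton _
    · have h1 := hex.choose_spec.1.1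
      have h2 := hex.choose_spec.1.2
      rw [abs_sub_lt_iff]
      constructor <;> linarith
    · linarith [hex.choose_spec.2]

/-- If a continuous path is below `f` on `D ∩ [a,b]` (where `D` captures near-minima of `f`
and contains `a`, `b`), then it is below `f` on all of `[a,b]`. -/
lemma capture_interval (f : ℝ → ℝ) (D : Set ℝ)
    (hcap : ∀ t : ℝ, ∀ ε > (0:ℝ), ∀ δ > (0:ℝ), ∃ s ∈ D, |s - t| < δ ∧ f s < f t + ε)
    (a b : ℝ) (haD : a ∈ D) (hbD : b ∈ D) (bf : ℝ → ℝ) (hbf : Continuous bf)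
    (h : ∀ s ∈ D ∩ Icc a b, bf s ≤ f s) :
    ∀ t ∈ Icc a b, bf t ≤ f t := by
  intro t ht
  rcases eq_or_lt_of_le ht.1 with rfl | hlt
  · exact h _ ⟨haD, ht⟩
  rcases eq_or_lt_of_le ht.2 with rfl | hlt2
  · exact h _ ⟨hbD, ht⟩
  -- t is interior
  have hsel : ∀ ν : ℕ, ∃ s ∈ D ∩ Icc a b,
      |s - t| < 1 / ((ν : ℝ) + 1) ∧ f s < f t + 1 / ((ν : ℝ) + 1) := by
    intro ν
    have hν : (0:ℝ) < 1 / ((ν : ℝ) + 1) := by positivity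
    have hδpos : (0:ℝ) < min (1 / ((ν : ℝ) + 1)) (min (t - a) (b - t)) :=
      lt_min hν (lt_min (by linarith) (by linarith))
    obtain ⟨s, hsD, hs1, hs2⟩ := hcap t (1 / ((ν : ℝ) + 1)) hν _ hδpos
    have habs := abs_sub_lt_iff.mp hs1
    refine ⟨s, ⟨hsD, ?_, ?_⟩, ?_, hs2⟩
    · have := lt_of_lt_of_le hs1 (le_trans (min_le_right _ _) (min_le_left _ _))
      rw [abs_sub_lt_iff] at this
      linarith [this.2]
    · have := lt_of_lt_of_le hs1 (le_trans (min_le_right _ _) (min_le_right _ _))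
      rw [abs_sub_lt_iff] at this
      linarith [this.1]
    · exact lt_of_lt_of_le hs1 (min_le_left _ _)
  choose s hsmem hsclose hsval using hsel
  have hstend : Tendsto s atTop (nhds t) := by
    rw [Metric.tendsto_atTop]
    intro ε hε
    obtain ⟨N, hN⟩ := exists_nat_one_div_lt hε
    refine ⟨N, fun ν hν => ?_⟩
    rw [Real.dist_eq]
    calc |s ν - t| < 1 / ((ν : ℝ) + 1) := hsclose ν
      _ ≤ 1 / ((N : ℝ) + 1) := by
          apply one_div_le_one_div_of_le (by positivity)
          have : (N : ℝ) ≤ (ν : ℝ) := Nat.cast_le.mpr hν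
          linarith
      _ < ε := hN
  have h1 : Tendsto (fun ν : ℕ => bf (s ν)) atTop (nhds (bf t)) :=
    (hbf.continuousAt.tendsto).comp hstend
  have h2 : Tendsto (fun ν : ℕ => f t + 1 / ((ν : ℝ) + 1)) atTop (nhds (f t)) := by
    have : Tendsto (fun n : ℕ => 1 / ((n : ℝ) + 1)) atTop (nhds 0) :=
      tendsto_one_div_add_atTop_nhds_zero_nat
    have h3 := this.const_add (f t)
    simpa using h3
  exact le_of_tendsto_of_tendsto' h1 h2 fun ν =>
    le_of_lt (lt_of_le_of_lt (h _ (hsmem ν)) (hsval ν))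

/-- Finite-dimensional Harris-type inequality for a process with independent increments. -/
lemma core {Ω : Type*} [MeasurableSpace Ω] (P : Measure Ω) (B : ℝ → Ω → ℝ)
    (hB : IsBrownianMotion P B) (g : ℝ → ℝ) (v w : ℕ → ℝ)
    (hv : ∀ k, 0 ≤ v k) (hw : ∀ k, 0 ≤ w k) (n m : ℕ) :
    P ((⋂ k ∈ Finset.range n, {ω | B (v k) ω ≤ g (v k)}) ∩
        ⋂ k ∈ Finset.range m, {ω | B (w k) ω ≤ g (w k)}) ≥
      P (⋂ k ∈ Finset.range n, {ω | B (v k) ω ≤ g (v k)}) *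
      P (⋂ k ∈ Finset.range m, {ω | B (w k) ω ≤ g (w k)}) := by
  classical
  haveI := hB.isProb
  set A := ⋂ k ∈ Finset.range n, {ω | B (v k) ω ≤ g (v k)} with hA
  set C := ⋂ k ∈ Finset.range m, {ω | B (w k) ω ≤ g (w k)} with hC
  set Fs : Finset ℝ :=
    insert 0 ((Finset.range n).image v ∪ (Finset.range m).image w) with hFs
  have h0Fs : (0:ℝ) ∈ Fs := Finset.mem_insert_self _ _
  have hFsne : Fs.Nonempty := ⟨0, h0Fs⟩
  set m₀ := Fs.card with hm₀
  have hm₀pos : 0 < m₀ := Finset.card_pos.mpr hFsne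
  set iso : Fin m₀ ≃o (Fs : Set ℝ) := Fs.orderIsoOfFin rfl with hiso
  have hFs_nonneg : ∀ x ∈ Fs, (0:ℝ) ≤ x := by
    intro x hx
    rw [hFs] at hx
    rcases Finset.mem_insert.mp hx with h | h
    · rw [h]
    · rcases Finset.mem_union.mp h with h' | h'
      · obtain ⟨k, _, rfl⟩ := Finset.mem_image.mp h'
        exact hv k
      · obtain ⟨k, _, rfl⟩ := Finset.mem_image.mp h'
        exact hw k
  set M := Fs.max' hFsne with hM
  set t : ℕ → ℝ := fun i => if h : i < m₀ then (iso ⟨i, h⟩ : ℝ) else M with ht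
  have htval : ∀ (i : ℕ) (h : i < m₀), t i = (iso ⟨i, h⟩ : ℝ) := by
    intro i h; rw [ht]; exact dif_pos h
  have hisomem : ∀ j : Fin m₀, (iso j : ℝ) ∈ Fs := fun j => (iso j).2
  have ht0 : t 0 = 0 := by
    rw [htval 0 hm₀pos]
    have hj := iso.symm ⟨(0:ℝ), h0Fs⟩
    have h1 : (iso ⟨0, hm₀pos⟩ : ℝ) ≤ (iso (iso.symm ⟨(0:ℝ), h0Fs⟩) : ℝ) := by
      apply Subtype.coe_le_coe.mpr
      apply iso.monotone
      exact Fin.mk_le_mk.mpr (Nat.zero_le _)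
    rw [iso.apply_symm_apply] at h1
    exact le_antisymm h1 (hFs_nonneg _ (hisomem ⟨0, hm₀pos⟩))
  have htmono : Monotone t := by
    intro i j hij
    by_cases hi : i < m₀
    · by_cases hj : j < m₀
      · rw [htval i hi, htval j hj]
        exact Subtype.coe_le_coe.mpr (iso.monotone (Fin.mk_le_mk.mpr hij))
      · rw [htval i hi]
        have hMj : t j = M := by rw [ht]; exact dif_neg hj
        rw [hMj]
        exact Finset.le_max' Fs _ (hisomem ⟨i, hi⟩)
    · have hj : ¬ j < m₀ := fun h => hi (lt_of_le_of_lt hij h)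
      rw [ht]
      simp only [dif_neg hi, dif_neg hj]
      exact le_refl M
  have hindep := hB.indep m₀ t htmono (by rw [ht0])
  have hξmeas : ∀ i : Fin m₀, Measurable (fun ω => B (t (↑i + 1)) ω - B (t ↑i) ω) :=
    fun i => (hB.meas _).sub (hB.meas _)
  set ξvec : Ω → (Fin m₀ → ℝ) := fun ω i => B (t (↑i + 1)) ω - B (t ↑i) ω with hξvec
  have hξvecmeas : Measurable ξvec := measurable_pi_lambda _ fun i => hξmeas i
  -- telescoping
  have htel : ∀ j : ℕ, j ≤ m₀ → ∀ ω, B (t j) ω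
      = ∑ l ∈ Finset.univ.filter (fun l : Fin m₀ => (l : ℕ) < j), ξvec ω l := by
    intro j
    induction j with
    | zero =>
      intro _ ω
      have hemp : Finset.univ.filter (fun l : Fin m₀ => (l : ℕ) < 0) = ∅ := by
        ext l; simp
      rw [hemp, Finset.sum_empty, ht0, hB.start ω]
    | succ j ih =>
      intro hj ω
      have hjm : j < m₀ := Nat.lt_of_succ_le hj
      have hins : Finset.univ.filter (fun l : Fin m₀ => (l : ℕ) < j + 1)
          = insert (⟨j, hjm⟩ : Fin m₀)
              (Finset.univ.filter (fun l : Fin m₀ => (l : ℕ) < j)) := by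
        ext l
        simp only [Finset.mem_filter, Finset.mem_univ, true_and, Finset.mem_insert,
          Fin.ext_iff]
        omega
      rw [hins, Finset.sum_insert (by simp), ← ih (le_of_lt hjm) ω]
      have hx : ξvec ω ⟨j, hjm⟩ = B (t (j + 1)) ω - B (t j) ω := rfl
      rw [hx]
      ring
  -- the two lower sets
  set SA : Set (Fin m₀ → ℝ) := {x | ∀ k ∈ Finset.range n, ∀ j : Fin m₀, t ↑j = v k →
    (∑ l ∈ Finset.univ.filter (fun l : Fin m₀ => (l : ℕ) < (j : ℕ)), x l) ≤ g (v k)} with hSA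
  set SC : Set (Fin m₀ → ℝ) := {x | ∀ k ∈ Finset.range m, ∀ j : Fin m₀, t ↑j = w k →
    (∑ l ∈ Finset.univ.filter (fun l : Fin m₀ => (l : ℕ) < (j : ℕ)), x l) ≤ g (w k)} with hSC
  have hsummeas : ∀ j : Fin m₀,
      Measurable (fun x : Fin m₀ → ℝ =>
        ∑ l ∈ Finset.univ.filter (fun l : Fin m₀ => (l : ℕ) < (j : ℕ)), x l) := by
    intro j
    exact Finset.measurable_sum _ fun l _ => measurable_pi_apply l
  have hSAm : MeasurableSet SA := by
    have : SA = ⋂ k ∈ (Finset.range n : Finset ℕ), ⋂ j : Fin m₀, ⋂ (_ : t ↑j = v k),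
        {x : Fin m₀ → ℝ |
          (∑ l ∈ Finset.univ.filter (fun l : Fin m₀ => (l : ℕ) < (j : ℕ)), x l) ≤ g (v k)} := by
      ext x
      simp only [hSA, Set.mem_setOf_eq, Set.mem_iInter]
    rw [this]
    exact MeasurableSet.biInter (Finset.range n).countable_toSet fun k _ =>
      MeasurableSet.iInter fun j => MeasurableSet.iInter fun _ =>
        measurableSet_le (hsummeas j) measurable_const
  have hSCm : MeasurableSet SC := by
    have : SC = ⋂ k ∈ (Finset.range m : Finset ℕ), ⋂ j : Fin m₀, ⋂ (_ : t ↑j = w k),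
        {x : Fin m₀ → ℝ |
          (∑ l ∈ Finset.univ.filter (fun l : Fin m₀ => (l : ℕ) < (j : ℕ)), x l) ≤ g (w k)} := by
      ext x
      simp only [hSC, Set.mem_setOf_eq, Set.mem_iInter]
    rw [this]
    exact MeasurableSet.biInter (Finset.range m).countable_toSet fun k _ =>
      MeasurableSet.iInter fun j => MeasurableSet.iInter fun _ =>
        measurableSet_le (hsummeas j) measurable_const
  have hSAl : ∀ ⦃x y : Fin m₀ → ℝ⦄, x ≤ y → y ∈ SA → x ∈ SA := by
    intro x y hxy hy k hk j hj
    exact le_trans (Finset.sum_le_sum fun l _ => hxy l) (hy k hk j hj)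
  have hSCl : ∀ ⦃x y : Fin m₀ → ℝ⦄, x ≤ y → y ∈ SC → x ∈ SC := by
    intro x y hxy hy k hk j hj
    exact le_trans (Finset.sum_le_sum fun l _ => hxy l) (hy k hk j hj)
  -- identification of the events
  have hvmem : ∀ k ∈ Finset.range n, v k ∈ Fs := by
    intro k hk
    rw [hFs]
    exact Finset.mem_insert_of_mem (Finset.mem_union_left _ (Finset.mem_image_of_mem v hk))
  have hwmem : ∀ k ∈ Finset.range m, w k ∈ Fs := by
    intro k hk
    rw [hFs]
    exact Finset.mem_insert_of_mem (Finset.mem_union_right _ (Finset.mem_image_of_mem w hk))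
  have hgen : ∀ (N : ℕ) (u : ℕ → ℝ) (hu : ∀ k ∈ Finset.range N, u k ∈ Fs)
      (S : Set (Fin m₀ → ℝ))
      (hS : S = {x | ∀ k ∈ Finset.range N, ∀ j : Fin m₀, t ↑j = u k →
        (∑ l ∈ Finset.univ.filter (fun l : Fin m₀ => (l : ℕ) < (j : ℕ)), x l) ≤ g (u k)}),
      (⋂ k ∈ Finset.range N, {ω | B (u k) ω ≤ g (u k)}) = ξvec ⁻¹' S := by
    intro N u hu S hS
    ext ω
    simp only [Set.mem_iInter, Set.mem_preimage, hS, Set.mem_setOf_eq]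
    constructor
    · intro hω k hk j hj
      have hsum : (∑ l ∈ Finset.univ.filter (fun l : Fin m₀ => (l : ℕ) < (j : ℕ)), ξvec ω l)
          = B (t ↑j) ω := (htel ↑j (le_of_lt j.isLt) ω).symm
      rw [hsum, hj]
      exact hω k hk
    · intro hx k hk
      have hmem : u k ∈ Fs := hu k hk
      set j : Fin m₀ := iso.symm ⟨u k, hmem⟩ with hj
      have hjeq : (⟨(j : ℕ), j.isLt⟩ : Fin m₀) = j := by
        apply Fin.ext
        rfl
      have htj : t ↑j = u k := by
        rw [htval ↑j j.isLt, hjeq, hj, iso.apply_symm_apply]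
      have hb := hx k hk j htj
      calc B (u k) ω = B (t ↑j) ω := by rw [htj]
        _ = ∑ l ∈ Finset.univ.filter (fun l : Fin m₀ => (l : ℕ) < (j : ℕ)), ξvec ω l :=
            htel ↑j (le_of_lt j.isLt) ω
        _ ≤ g (u k) := hb
  have hAeq : A = ξvec ⁻¹' SA := hgen n v hvmem SA hSA
  have hCeq : C = ξvec ⁻¹' SC := hgen m w hwmem SC hSC
  -- law of the increment vector is the product of the marginal laws
  haveI hmargP : ∀ i : Fin m₀,
      IsProbabilityMeasure (P.map (fun ω => B (t (↑i + 1)) ω - B (t ↑i) ω)) :=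
    fun i => Measure.isProbabilityMeasure_map (hξmeas i).aemeasurable
  have hmap : P.map ξvec
      = Measure.pi (fun i : Fin m₀ => P.map (fun ω => B (t (↑i + 1)) ω - B (t ↑i) ω)) := by
    symm
    apply Measure.pi_eq
    intro s hs
    rw [Measure.map_apply hξvecmeas (MeasurableSet.univ_pi hs)]
    have hpre : ξvec ⁻¹' (Set.univ.pi s)
        = ⋂ i : Fin m₀, (fun ω => B (t (↑i + 1)) ω - B (t ↑i) ω) ⁻¹' (s i) := by
      ext ω
      simp only [Set.mem_preimage, Set.mem_pi, Set.mem_univ, true_implies, Set.mem_iInter]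
      exact Iff.rfl
    rw [hpre, hindep.meas_iInter (fun i => ⟨s i, hs i, rfl⟩)]
    exact Finset.prod_congr rfl fun i _ =>
      (Measure.map_apply (hξmeas i) (hs i)).symm
  -- conclude via Harris
  rw [ge_iff_le, hAeq, hCeq, ← Set.preimage_inter,
    ← Measure.map_apply hξvecmeas hSAm, ← Measure.map_apply hξvecmeas hSCm,
    ← Measure.map_apply hξvecmeas (hSAm.inter hSCm), hmap]
  exact harris_sets m₀ _ hmargP SA SC hSAm hSCm hSAl hSCl

/-- Slepian-type inequality: for Brownian motion `B`, a measurable boundary `f`, and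
`0 < t₀ < T`, `P(B_t ≤ f(t), t ∈ [0,T]) ≥ P(B_t ≤ f(t), t ∈ [0,t₀]) · P(B_t ≤ f(t), t ∈ [t₀,T])`. -/
theorem stmt13 {Ω : Type*} [MeasurableSpace Ω] (P : Measure Ω) (B : ℝ → Ω → ℝ)
    (hB : IsBrownianMotion P B) (f : ℝ → ℝ) (hf : Measurable f)
    (t₀ T : ℝ) (ht₀ : 0 < t₀) (hT : t₀ < T) :
    P {ω | ∀ t ∈ Icc (0:ℝ) T, B t ω ≤ f t} ≥
      P {ω | ∀ t ∈ Icc (0:ℝ) t₀, B t ω ≤ f t} * P {ω | ∀ t ∈ Icc t₀ T, B t ω ≤ f t} := by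
  classical
  haveI := hB.isProb
  obtain ⟨D₀, hD₀c, hcap₀⟩ := exists_countable_capture f
  set D : Set ℝ := D₀ ∪ {0, t₀, T} with hD
  have hDc : D.Countable := hD₀c.union
    ((Set.countable_singleton T).insert t₀ |>.insert 0)
  have h0D : (0:ℝ) ∈ D := Or.inr (by simp)
  have ht₀D : t₀ ∈ D := Or.inr (by simp)
  have hTD : T ∈ D := Or.inr (by simp)
  have hcap : ∀ t : ℝ, ∀ ε > (0:ℝ), ∀ δ > (0:ℝ), ∃ s ∈ D, |s - t| < δ ∧ f s < f t + ε := by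
    intro t ε hε δ hδ
    obtain ⟨s, hs, h1, h2⟩ := hcap₀ t ε hε δ hδ
    exact ⟨s, Or.inl hs, h1, h2⟩
  -- enumerations of D on the two intervals
  have h1ne : (D ∩ Icc (0:ℝ) t₀).Nonempty := ⟨0, h0D, le_refl 0, le_of_lt ht₀⟩
  have h2ne : (D ∩ Icc t₀ T).Nonempty := ⟨t₀, ht₀D, le_refl t₀, le_of_lt hT⟩
  obtain ⟨e₁, he₁⟩ := (hDc.mono Set.inter_subset_left).exists_eq_range h1ne
  obtain ⟨e₂, he₂⟩ := (hDc.mono Set.inter_subset_left).exists_eq_range h2ne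
  have he₁mem : ∀ k, e₁ k ∈ D ∩ Icc (0:ℝ) t₀ := by
    intro k; rw [he₁]; exact Set.mem_range_self k
  have he₂mem : ∀ k, e₂ k ∈ D ∩ Icc t₀ T := by
    intro k; rw [he₂]; exact Set.mem_range_self k
  have he₁nonneg : ∀ k, 0 ≤ e₁ k := fun k => (he₁mem k).2.1
  have he₂nonneg : ∀ k, 0 ≤ e₂ k := fun k => le_trans (le_of_lt ht₀) (he₂mem k).2.1
  set An : ℕ → Set Ω := fun n => ⋂ k ∈ Finset.range n, {ω | B (e₁ k) ω ≤ f (e₁ k)} with hAn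
  set Cn : ℕ → Set Ω := fun n => ⋂ k ∈ Finset.range n, {ω | B (e₂ k) ω ≤ f (e₂ k)} with hCn
  -- finite-dimensional inequality
  have hcore : ∀ n : ℕ, P (An n) * P (Cn n) ≤ P (An n ∩ Cn n) := by
    intro n
    exact core P B hB f e₁ e₂ he₁nonneg he₂nonneg n n
  -- the full events are contained in the finite ones
  have hsubA : ∀ n, {ω | ∀ t ∈ Icc (0:ℝ) t₀, B t ω ≤ f t} ⊆ An n := by
    intro n ω hω
    rw [hAn]
    refine Set.mem_iInter₂.mpr fun k _ => ?_
    exact hω (e₁ k) (he₁mem k).2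
  have hsubC : ∀ n, {ω | ∀ t ∈ Icc t₀ T, B t ω ≤ f t} ⊆ Cn n := by
    intro n ω hω
    rw [hCn]
    refine Set.mem_iInter₂.mpr fun k _ => ?_
    exact hω (e₂ k) (he₂mem k).2
  -- identification of the intersection
  have hset : (⋂ n, An n ∩ Cn n) = {ω | ∀ t ∈ Icc (0:ℝ) T, B t ω ≤ f t} := by
    ext ω
    simp only [Set.mem_iInter, Set.mem_inter_iff, Set.mem_setOf_eq]
    constructor
    · intro hω
      have hω1 : ∀ k : ℕ, B (e₁ k) ω ≤ f (e₁ k) := by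
        intro k
        have := (hω (k + 1)).1
        rw [hAn] at this
        exact Set.mem_iInter₂.mp this k (Finset.self_mem_range_succ k)
      have hω2 : ∀ k : ℕ, B (e₂ k) ω ≤ f (e₂ k) := by
        intro k
        have := (hω (k + 1)).2
        rw [hCn] at this
        exact Set.mem_iInter₂.mp this k (Finset.self_mem_range_succ k)
      have hI1 : ∀ t ∈ Icc (0:ℝ) t₀, B t ω ≤ f t := by
        apply capture_interval f D hcap 0 t₀ h0D ht₀D _ (hB.cont ω)
        intro s hs
        rw [he₁] at hs
        obtain ⟨k, rfl⟩ := hs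
        exact hω1 k
      have hI2 : ∀ t ∈ Icc t₀ T, B t ω ≤ f t := by
        apply capture_interval f D hcap t₀ T ht₀D hTD _ (hB.cont ω)
        intro s hs
        rw [he₂] at hs
        obtain ⟨k, rfl⟩ := hs
        exact hω2 k
      intro t ht
      rcases le_total t t₀ with h | h
      · exact hI1 t ⟨ht.1, h⟩
      · exact hI2 t ⟨h, ht.2⟩
    · intro hω n
      constructor
      · exact hsubA n fun t ht => hω t ⟨ht.1, le_trans ht.2 (le_of_lt hT)⟩
      · exact hsubC n fun t ht => hω t ⟨le_trans (le_of_lt ht₀) ht.1, ht.2⟩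
  -- measurability and monotonicity for continuity from above
  have hmeasn : ∀ n, MeasurableSet (An n ∩ Cn n) := by
    intro n
    apply MeasurableSet.inter
    · rw [hAn]
      exact MeasurableSet.biInter (Finset.range n).countable_toSet fun k _ =>
        measurableSet_le (hB.meas _) measurable_const
    · rw [hCn]
      exact MeasurableSet.biInter (Finset.range n).countable_toSet fun k _ =>
        measurableSet_le (hB.meas _) measurable_const
  have hanti : Antitone fun n => An n ∩ Cn n := by
    intro n n' h
    apply Set.inter_subset_inter
    · rw [hAn]
      intro ω hω
      refine Set.mem_iInter₂.mpr fun k hk => ?_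
      exact Set.mem_iInter₂.mp hω k (Finset.mem_range.mpr
        (lt_of_lt_of_le (Finset.mem_range.mp hk) h))
    · rw [hCn]
      intro ω hω
      refine Set.mem_iInter₂.mpr fun k hk => ?_
      exact Set.mem_iInter₂.mp hω k (Finset.mem_range.mpr
        (lt_of_lt_of_le (Finset.mem_range.mp hk) h))
  have htend : Tendsto (fun n => P (An n ∩ Cn n)) atTop (nhds (P (⋂ n, An n ∩ Cn n))) :=
    tendsto_measure_iInter_atTop (fun n => (hmeasn n).nullMeasurableSet) hanti
      ⟨0, measure_ne_top P _⟩
  rw [ge_iff_le, ← hset]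
  apply ge_of_tendsto htend
  apply Filter.Eventually.of_forall
  intro n
  calc P {ω | ∀ t ∈ Icc (0:ℝ) t₀, B t ω ≤ f t} * P {ω | ∀ t ∈ Icc t₀ T, B t ω ≤ f t}
      ≤ P (An n) * P (Cn n) :=
        mul_le_mul' (measure_mono (hsubA n)) (measure_mono (hsubC n))
    _ ≤ P (An n ∩ Cn n) := hcore n
end
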